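/- arXiv:1301.4475 — 6 statements merged into one kernel-verified Lean document; each statement's English description precedes it below -/
import Mathlib

section
/- For every radial function u in H²(ℝ⁴) (identified with a function u(r) of the radius), the inequality (2π² ∫₀^∞ |u'(r)|² r dr)^{1/2} ≤ (1/2) ‖Δu‖_{L²(ℝ⁴)} holds, i.e. ‖(1/r) ∂_r u‖_{L²(ℝ⁴)} ≤ (1/2) ‖Δu‖_{L²(ℝ⁴)}. -/
open MeasureTheory Real

/-- For a smooth compactly supported radial function `u` on `ℝ⁴` (identified with a
function of the radius), `‖(1/r) ∂_r u‖_{L²(ℝ⁴)} ≤ (1/2) ‖Δu‖_{L²(ℝ⁴)}`, i.e.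
`(2π² ∫₀^∞ |u'(r)|² r dr)^{1/2} ≤ (1/2) (2π² ∫₀^∞ |u''(r) + (3/r) u'(r)|² r³ dr)^{1/2}`. -/
theorem radial_hardy_type_inequality
    (u u' u'' : ℝ → ℝ)
    (hu : ContDiff ℝ (⊤ : ℕ∞) u) (hsupp : HasCompactSupport u)
    (hu' : ∀ r, HasDerivAt u (u' r) r)
    (hu'' : ∀ r, HasDerivAt u' (u'' r) r) :
    Real.sqrt (2 * π ^ 2 * ∫ r in Set.Ioi (0 : ℝ), (u' r) ^ 2 * r) ≤
      (1 / 2) *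
        Real.sqrt (2 * π ^ 2 * ∫ r in Set.Ioi (0 : ℝ),
          (u'' r + (3 / r) * u' r) ^ 2 * r ^ 3) := by
  -- basic facts about u', u''
  have hu'eq : u' = deriv u := funext fun r => (hu' r).deriv.symm
  have hu''eq : u'' = deriv u' := funext fun r => (hu'' r).deriv.symm
  have hu'c : HasCompactSupport u' := by rw [hu'eq]; exact hsupp.deriv
  have hu''c : HasCompactSupport u'' := by rw [hu''eq]; exact hu'c.deriv
  have hu'cont : Continuous u' :=
    continuous_iff_continuousAt.2 fun r => (hu'' r).differentiableAt.continuousAt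
  have hu''cont : Continuous u'' := by
    rw [hu''eq, hu'eq]
    have hu0 : ContDiff ℝ ((⊤ : ℕ∞) : WithTop ℕ∞) u := hu.of_le (by simp)
    have h1 : ContDiff ℝ ((⊤ : ℕ∞) : WithTop ℕ∞) (deriv u) := (contDiff_infty_iff_deriv.1 hu0).2
    exact ((contDiff_infty_iff_deriv.1 h1).2).continuous
  -- the pieces
  set g1 : ℝ → ℝ := fun r => 4 * (u' r ^ 2 * r) with hg1
  set g2 : ℝ → ℝ := fun r => r * (u'' r * r + u' r) ^ 2 with hg2
  set F : ℝ → ℝ := fun r => 2 * u' r ^ 2 * r ^ 2 with hF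
  set F' : ℝ → ℝ := fun r => 4 * u' r * u'' r * r ^ 2 + 4 * u' r ^ 2 * r with hF'
  have hKc : IsCompact (tsupport u' ∪ tsupport u'') := hu'c.union hu''c
  have hvanish : ∀ x, x ∉ tsupport u' ∪ tsupport u'' → u' x = 0 ∧ u'' x = 0 := by
    intro x hx
    exact ⟨image_eq_zero_of_notMem_tsupport (fun h => hx (Set.mem_union_left _ h)),
      image_eq_zero_of_notMem_tsupport (fun h => hx (Set.mem_union_right _ h))⟩
  have hg1c : HasCompactSupport g1 :=
    HasCompactSupport.intro hKc fun x hx => by simp [hg1, (hvanish x hx).1]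
  have hg2c : HasCompactSupport g2 :=
    HasCompactSupport.intro hKc fun x hx => by simp [hg2, (hvanish x hx).1, (hvanish x hx).2]
  have hF'c : HasCompactSupport F' :=
    HasCompactSupport.intro hKc fun x hx => by simp [hF', (hvanish x hx).1]
  have hFc : HasCompactSupport F :=
    HasCompactSupport.intro hKc fun x hx => by simp [hF, (hvanish x hx).1]
  have hg1cont : Continuous g1 := by continuity
  have hg2cont : Continuous g2 := by continuity
  have hF'cont : Continuous F' := by continuity
  have hFcont : Continuous F := by continuity
  have hg1int : IntegrableOn g1 (Set.Ioi (0:ℝ)) :=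
    (hg1cont.integrable_of_hasCompactSupport hg1c).integrableOn
  have hg2int : IntegrableOn g2 (Set.Ioi (0:ℝ)) :=
    (hg2cont.integrable_of_hasCompactSupport hg2c).integrableOn
  have hF'int : IntegrableOn F' (Set.Ioi (0:ℝ)) :=
    (hF'cont.integrable_of_hasCompactSupport hF'c).integrableOn
  -- derivative of F
  have hFderiv : ∀ r, HasDerivAt F (F' r) r := by
    intro r
    have h1 : HasDerivAt (fun r => 2 * u' r ^ 2) (2 * (2 * u' r ^ 1 * u'' r)) r :=
      ((hu'' r).pow 2).const_mul 2
    have h2 : HasDerivAt (fun x : ℝ => x ^ 2) (2 * r ^ 1) r := by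
      simpa using hasDerivAt_pow 2 r
    have := h1.mul h2
    convert this using 1
    · rfl
    · rfl
    · funext x; simp [hF]
    · simp [hF']; ring
  -- tendsto 0 at infinity
  have hFtendsto : Filter.Tendsto F Filter.atTop (nhds 0) := by
    obtain ⟨R, hRpos, hR⟩ := hFc.exists_pos_le_norm
    refine Filter.Tendsto.congr' ?_ tendsto_const_nhds
    filter_upwards [Filter.eventually_ge_atTop R] with x hx
    exact (hR x (by rw [Real.norm_eq_abs, abs_of_nonneg (le_trans hRpos.le hx)]; exact hx)).symm
  -- integral of F' is zero
  have hintF' : ∫ r in Set.Ioi (0:ℝ), F' r = 0 := by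
    rw [integral_Ioi_of_hasDerivAt_of_tendsto' (fun x _ => hFderiv x) hF'int hFtendsto]
    simp [hF]
  -- pointwise identity on Ioi 0
  have hpt : ∀ r ∈ Set.Ioi (0:ℝ),
      (u'' r + (3 / r) * u' r) ^ 2 * r ^ 3 = g1 r + g2 r + F' r := by
    intro r hr
    have hr0 : r ≠ 0 := ne_of_gt hr
    field_simp [hg1, hg2, hF']
    ring
  -- the key integral inequality
  have hkey : 4 * (∫ r in Set.Ioi (0:ℝ), u' r ^ 2 * r) ≤
      ∫ r in Set.Ioi (0:ℝ), (u'' r + (3 / r) * u' r) ^ 2 * r ^ 3 := by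
    have h1 : ∫ r in Set.Ioi (0:ℝ), (u'' r + (3 / r) * u' r) ^ 2 * r ^ 3 =
        ∫ r in Set.Ioi (0:ℝ), (g1 r + g2 r + F' r) :=
      setIntegral_congr_fun measurableSet_Ioi hpt
    have hg12int : IntegrableOn (fun r => g1 r + g2 r) (Set.Ioi (0:ℝ)) := hg1int.add hg2int
    rw [h1, integral_add hg12int hF'int, integral_add hg1int hg2int, hintF', add_zero]
    have h2 : ∫ r in Set.Ioi (0:ℝ), g1 r = 4 * ∫ r in Set.Ioi (0:ℝ), u' r ^ 2 * r := by
      simp only [hg1]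
      exact integral_const_mul 4 _
    rw [h2]
    have h3 : 0 ≤ ∫ r in Set.Ioi (0:ℝ), g2 r := by
      refine setIntegral_nonneg measurableSet_Ioi fun r hr => ?_
      have : (0:ℝ) < r := hr
      positivity
    linarith
  -- conclude via sqrt
  have hπ : (0:ℝ) ≤ π ^ 2 := sq_nonneg π
  have hle : 2 * π ^ 2 * (∫ r in Set.Ioi (0:ℝ), u' r ^ 2 * r) ≤
      (1/2)^2 * (2 * π ^ 2 * ∫ r in Set.Ioi (0:ℝ), (u'' r + (3 / r) * u' r) ^ 2 * r ^ 3) := by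
    nlinarith
  calc Real.sqrt (2 * π ^ 2 * ∫ r in Set.Ioi (0:ℝ), u' r ^ 2 * r)
      ≤ Real.sqrt ((1/2)^2 * (2 * π ^ 2 *
          ∫ r in Set.Ioi (0:ℝ), (u'' r + (3 / r) * u' r) ^ 2 * r ^ 3)) :=
        Real.sqrt_le_sqrt hle
    _ = (1/2) * Real.sqrt (2 * π ^ 2 *
          ∫ r in Set.Ioi (0:ℝ), (u'' r + (3 / r) * u' r) ^ 2 * r ^ 3) := by
        rw [Real.sqrt_mul (by positivity), Real.sqrt_sq (by norm_num)]
end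

section
/- For every smooth compactly supported radial function u on ℝ⁴ and every r > 0, one has |u(r)|² ≤ (1/(π² r³)) ‖u‖_{L²(ℝ⁴)} ‖∇u‖_{L²(ℝ⁴)}, hence |u(x)| ≲ |x|^{-3/2} ‖u‖_{L²(ℝ⁴)}^{1/2} ‖∇u‖_{L²(ℝ⁴)}^{1/2}. -/
open MeasureTheory Real Set Filter

/-- For every smooth compactly supported radial function `u` on `ℝ⁴` and `r > 0`,
`|u(r)|² ≤ (1/(π² r³)) ‖u‖_{L²(ℝ⁴)} ‖∇u‖_{L²(ℝ⁴)}`, where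
`‖u‖²_{L²(ℝ⁴)} = 2π² ∫₀^∞ |u(s)|² s³ ds` and `‖∇u‖²_{L²(ℝ⁴)} = 2π² ∫₀^∞ |u'(s)|² s³ ds`. -/
theorem radial_linfty_decay
    (u u' : ℝ → ℝ)
    (hu : ContDiff ℝ (⊤ : ℕ∞) u) (hsupp : HasCompactSupport u)
    (hu' : ∀ r, HasDerivAt u (u' r) r) :
    ∀ r > (0 : ℝ),
      (u r) ^ 2 ≤ (1 / (π ^ 2 * r ^ 3)) *
        Real.sqrt (2 * π ^ 2 * ∫ s in Set.Ioi (0 : ℝ), (u s) ^ 2 * s ^ 3) *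
        Real.sqrt (2 * π ^ 2 * ∫ s in Set.Ioi (0 : ℝ), (u' s) ^ 2 * s ^ 3) := by
  intro r hr
  have hderiv_eq : u' = deriv u := funext fun x => ((hu' x).deriv).symm
  have hu'cont : Continuous u' := by
    rw [hderiv_eq]; exact hu.continuous_deriv (by simp)
  have hu'supp : HasCompactSupport u' := by
    rw [hderiv_eq]; exact hsupp.deriv
  have hucont : Continuous u := hu.continuous
  set F : ℝ → ℝ := fun s => |u s| * Real.sqrt (s ^ 3) with hF
  set G : ℝ → ℝ := fun s => |u' s| * Real.sqrt (s ^ 3) with hG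
  have hFcont : Continuous F := (hucont.abs).mul (continuous_sqrt.comp (continuous_pow 3))
  have hGcont : Continuous G := (hu'cont.abs).mul (continuous_sqrt.comp (continuous_pow 3))
  have hFsupp : HasCompactSupport F := (hsupp.abs).mul_right
  have hGsupp : HasCompactSupport G := (hu'supp.abs).mul_right
  -- integrabilities
  have hA_int : IntegrableOn (fun s => u s ^ 2 * s ^ 3) (Ioi (0:ℝ)) :=
    (((hucont.pow 2).mul (continuous_pow 3)).integrable_of_hasCompactSupport
      (((hsupp.comp_left (g := fun x : ℝ => x ^ 2) (by simp))).mul_right :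
          HasCompactSupport (fun s => u s ^ 2 * s ^ 3))).integrableOn
  have hB_int : IntegrableOn (fun s => u' s ^ 2 * s ^ 3) (Ioi (0:ℝ)) :=
    (((hu'cont.pow 2).mul (continuous_pow 3)).integrable_of_hasCompactSupport
      (((hu'supp.comp_left (g := fun x : ℝ => x ^ 2) (by simp))).mul_right :
          HasCompactSupport (fun s => u' s ^ 2 * s ^ 3))).integrableOn
  have hF2_int : IntegrableOn (fun s => F s ^ 2) (Ioi r) :=
    (((hFcont.pow 2)).integrable_of_hasCompactSupport
      (hFsupp.comp_left (g := fun x : ℝ => x ^ 2) (by simp) :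
        HasCompactSupport (fun s => F s ^ 2))).integrableOn
  have hG2_int : IntegrableOn (fun s => G s ^ 2) (Ioi r) :=
    (((hGcont.pow 2)).integrable_of_hasCompactSupport
      (hGsupp.comp_left (g := fun x : ℝ => x ^ 2) (by simp) :
        HasCompactSupport (fun s => G s ^ 2))).integrableOn
  have hFG_int : IntegrableOn (fun s => F s * G s) (Ioi r) :=
    ((hFcont.mul hGcont).integrable_of_hasCompactSupport
      (hFsupp.mul_right : HasCompactSupport (fun s => F s * G s))).integrableOn
  have huu'_int : IntegrableOn (fun s => 2 * u s * u' s) (Ioi r) :=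
    (((continuous_const.mul hucont).mul hu'cont).integrable_of_hasCompactSupport
      ((hsupp.mul_left).mul_right : HasCompactSupport (fun s => 2 * u s * u' s))).integrableOn
  -- u^2 tends to 0 at infinity
  have htend : Tendsto (fun s => u s ^ 2) atTop (nhds 0) :=
    ((hsupp.comp_left (g := fun x : ℝ => x ^ 2) (by simp)).is_zero_at_infty.mono_left
      _root_.atTop_le_cocompact)
  -- key identity
  have key : ∫ s in Ioi r, 2 * u s * u' s = 0 - u r ^ 2 := by
    apply integral_Ioi_of_hasDerivAt_of_tendsto' (f := fun s => u s ^ 2) _ huu'_int htend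
    intro x _
    have := (hu' x).fun_pow 2
    simpa [mul_comm] using this
  have h1 : u r ^ 2 = ∫ s in Ioi r, -(2 * u s * u' s) := by
    rw [integral_neg, key]; ring
  -- pointwise bound
  have pointwise : ∀ s ∈ Ioi r, -(2 * u s * u' s) ≤ (2 / r ^ 3) * (F s * G s) := by
    intro s hs
    have hrs : r ≤ s := le_of_lt hs
    have hs0 : (0:ℝ) < s := lt_trans hr hs
    have hr3 : (0:ℝ) < r ^ 3 := by positivity
    have hss : Real.sqrt (s ^ 3) * Real.sqrt (s ^ 3) = s ^ 3 :=
      Real.mul_self_sqrt (by positivity)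
    have hFGs : F s * G s = |u s| * |u' s| * s ^ 3 := by
      simp only [hF, hG]
      calc |u s| * Real.sqrt (s ^ 3) * (|u' s| * Real.sqrt (s ^ 3))
          = |u s| * |u' s| * (Real.sqrt (s ^ 3) * Real.sqrt (s ^ 3)) := by ring
        _ = |u s| * |u' s| * s ^ 3 := by rw [hss]
    rw [hFGs]
    have habs : -(2 * u s * u' s) ≤ 2 * (|u s| * |u' s|) := by
      calc -(2 * u s * u' s) ≤ |2 * u s * u' s| := neg_le_abs _
        _ = 2 * (|u s| * |u' s|) := by
            rw [abs_mul, abs_mul]; simp [abs_of_nonneg]; ring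
    have hr3s3 : r ^ 3 ≤ s ^ 3 := pow_le_pow_left₀ hr.le hrs 3
    have h2 : 2 * (|u s| * |u' s|) ≤ 2 / r ^ 3 * (|u s| * |u' s| * s ^ 3) := by
      rw [div_mul_eq_mul_div, le_div_iff₀ hr3]
      have hab : (0:ℝ) ≤ |u s| * |u' s| := by positivity
      nlinarith [mul_le_mul_of_nonneg_left hr3s3 hab]
    linarith
  have step2 : (∫ s in Ioi r, -(2 * u s * u' s)) ≤ ∫ s in Ioi r, (2 / r ^ 3) * (F s * G s) :=
    setIntegral_mono_on huu'_int.neg (hFG_int.const_mul _) measurableSet_Ioi pointwise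
  -- Cauchy-Schwarz
  have hpq : (2:ℝ).HolderConjugate 2 := by
    rw [Real.holderConjugate_iff_eq_conjExponent (by norm_num)]; norm_num
  have hofReal : (ENNReal.ofReal (2:ℝ)) = 2 := by
    simp [ENNReal.ofReal_ofNat]
  have hFmem : MemLp F (ENNReal.ofReal (2:ℝ)) (volume.restrict (Ioi r)) := by
    rw [hofReal]
    exact (memLp_two_iff_integrable_sq hFcont.aestronglyMeasurable.restrict).2 hF2_int
  have hGmem : MemLp G (ENNReal.ofReal (2:ℝ)) (volume.restrict (Ioi r)) := by
    rw [hofReal]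
    exact (memLp_two_iff_integrable_sq hGcont.aestronglyMeasurable.restrict).2 hG2_int
  have CS : (∫ s in Ioi r, F s * G s) ≤
      (∫ s in Ioi r, F s ^ (2:ℝ)) ^ (1/(2:ℝ)) * (∫ s in Ioi r, G s ^ (2:ℝ)) ^ (1/(2:ℝ)) :=
    integral_mul_le_Lp_mul_Lq_of_nonneg hpq
      (Filter.Eventually.of_forall fun s => by positivity)
      (Filter.Eventually.of_forall fun s => by positivity) hFmem hGmem
  -- rewrite squares
  have hF2eq : (∫ s in Ioi r, F s ^ (2:ℝ)) = ∫ s in Ioi r, u s ^ 2 * s ^ 3 := by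
    apply setIntegral_congr_fun measurableSet_Ioi
    intro s hs
    have hs0 : (0:ℝ) ≤ s := (le_of_lt (lt_trans hr hs))
    show F s ^ (2:ℝ) = u s ^ 2 * s ^ 3
    rw [show F s ^ (2:ℝ) = F s ^ (2:ℕ) by rw [← Real.rpow_natCast]; norm_num]
    simp only [hF]
    rw [mul_pow, sq_abs, Real.sq_sqrt (by positivity)]
  have hG2eq : (∫ s in Ioi r, G s ^ (2:ℝ)) = ∫ s in Ioi r, u' s ^ 2 * s ^ 3 := by
    apply setIntegral_congr_fun measurableSet_Ioi
    intro s hs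
    have hs0 : (0:ℝ) ≤ s := (le_of_lt (lt_trans hr hs))
    show G s ^ (2:ℝ) = u' s ^ 2 * s ^ 3
    rw [show G s ^ (2:ℝ) = G s ^ (2:ℕ) by rw [← Real.rpow_natCast]; norm_num]
    simp only [hG]
    rw [mul_pow, sq_abs, Real.sq_sqrt (by positivity)]
  -- set monotonicity
  have hsub : (∫ s in Ioi r, u s ^ 2 * s ^ 3) ≤ ∫ s in Ioi (0:ℝ), u s ^ 2 * s ^ 3 := by
    apply setIntegral_mono_set hA_int
    · filter_upwards [ae_restrict_mem measurableSet_Ioi] with s hs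
      have : (0:ℝ) < s := hs
      positivity
    · exact HasSubset.Subset.eventuallyLE (Ioi_subset_Ioi hr.le)
  have hsub' : (∫ s in Ioi r, u' s ^ 2 * s ^ 3) ≤ ∫ s in Ioi (0:ℝ), u' s ^ 2 * s ^ 3 := by
    apply setIntegral_mono_set hB_int
    · filter_upwards [ae_restrict_mem measurableSet_Ioi] with s hs
      have : (0:ℝ) < s := hs
      positivity
    · exact HasSubset.Subset.eventuallyLE (Ioi_subset_Ioi hr.le)
  set A := ∫ s in Ioi (0:ℝ), u s ^ 2 * s ^ 3 with hA
  set B := ∫ s in Ioi (0:ℝ), u' s ^ 2 * s ^ 3 with hB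
  have hAr_nonneg : (0:ℝ) ≤ ∫ s in Ioi r, u s ^ 2 * s ^ 3 := by
    apply setIntegral_nonneg measurableSet_Ioi
    intro s hs; have : (0:ℝ) < s := lt_trans hr hs; positivity
  have hBr_nonneg : (0:ℝ) ≤ ∫ s in Ioi r, u' s ^ 2 * s ^ 3 := by
    apply setIntegral_nonneg measurableSet_Ioi
    intro s hs; have : (0:ℝ) < s := lt_trans hr hs; positivity
  -- assemble
  have chain : u r ^ 2 ≤ (2 / r ^ 3) * (Real.sqrt A * Real.sqrt B) := by
    have e1 : (∫ s in Ioi r, (2 / r ^ 3) * (F s * G s))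
        = (2 / r ^ 3) * ∫ s in Ioi r, F s * G s := integral_const_mul (2 / r ^ 3) (fun s => F s * G s)
    have sqrt_eq : ∀ x : ℝ, x ^ (1/(2:ℝ)) = Real.sqrt x := fun x =>
      (Real.sqrt_eq_rpow x).symm
    have CS' : (∫ s in Ioi r, F s * G s) ≤ Real.sqrt A * Real.sqrt B := by
      calc (∫ s in Ioi r, F s * G s)
          ≤ (∫ s in Ioi r, F s ^ (2:ℝ)) ^ (1/(2:ℝ)) *
            (∫ s in Ioi r, G s ^ (2:ℝ)) ^ (1/(2:ℝ)) := CS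
        _ = Real.sqrt (∫ s in Ioi r, u s ^ 2 * s ^ 3) *
            Real.sqrt (∫ s in Ioi r, u' s ^ 2 * s ^ 3) := by
            rw [hF2eq, hG2eq, sqrt_eq, sqrt_eq]
        _ ≤ Real.sqrt A * Real.sqrt B := by
            apply mul_le_mul (Real.sqrt_le_sqrt hsub) (Real.sqrt_le_sqrt hsub')
              (Real.sqrt_nonneg _) (Real.sqrt_nonneg _)
    calc u r ^ 2 = ∫ s in Ioi r, -(2 * u s * u' s) := h1
      _ ≤ ∫ s in Ioi r, (2 / r ^ 3) * (F s * G s) := step2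
      _ = (2 / r ^ 3) * ∫ s in Ioi r, F s * G s := e1
      _ ≤ (2 / r ^ 3) * (Real.sqrt A * Real.sqrt B) := by
          apply mul_le_mul_of_nonneg_left CS' (by positivity)
  have hRHS : (1 / (π ^ 2 * r ^ 3)) * Real.sqrt (2 * π ^ 2 * A) * Real.sqrt (2 * π ^ 2 * B)
      = (2 / r ^ 3) * (Real.sqrt A * Real.sqrt B) := by
    have hpi : (0:ℝ) < π := Real.pi_pos
    have hs2 : Real.sqrt (2 * π ^ 2 * A) = Real.sqrt 2 * π * Real.sqrt A := by
      rw [Real.sqrt_mul (by positivity) A, Real.sqrt_mul (by norm_num) (π ^ 2),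
        Real.sqrt_sq hpi.le]
    have hs2' : Real.sqrt (2 * π ^ 2 * B) = Real.sqrt 2 * π * Real.sqrt B := by
      rw [Real.sqrt_mul (by positivity) B, Real.sqrt_mul (by norm_num) (π ^ 2),
        Real.sqrt_sq hpi.le]
    have h22 : Real.sqrt 2 * Real.sqrt 2 = 2 := Real.mul_self_sqrt (by norm_num)
    rw [hs2, hs2']
    field_simp
    linear_combination (Real.sqrt A * Real.sqrt B) * h22
  rw [hRHS]
  exact chain
end

section
/- As α → ∞, ∫_{e^{-α}}^{1} r³ e^{(4/α) (log r)²} dr → 1/2. -/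
/-! Substituting `r = e^{-t}` turns the integral into `∫₀^α exp (4t²/α - 4t) dt`. The integrand is
symmetric under `t ↦ α - t`, so this is twice the integral over `[0, α/2]`, where
`4t²/α ≤ 2t` gives the integrable majorant `e^{-2t}`. By dominated convergence the limit is
`2 ∫₀^∞ e^{-4t} dt = 1/2`. -/

open MeasureTheory Real Filter Set Topology

theorem intervalIntegral.integral_comp_exp_neg_mul_exp_neg (f : ℝ → ℝ)
    (hf : ContinuousOn f (Ioi 0)) (a : ℝ) :
    ∫ t in 0..a, f (exp (-t)) * exp (-t) = ∫ r in exp (-a)..1, f r := by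
  have h := intervalIntegral.integral_comp_mul_deriv' (a := 0) (b := a)
    (f := fun t => exp (-t)) (f' := fun t => -exp (-t)) (g := f)
    (fun t _ => by simpa using (hasDerivAt_neg t).exp) (by fun_prop)
    (hf.mono (by rintro _ ⟨t, _, rfl⟩; exact exp_pos _))
  simp only [Function.comp_def, neg_zero, exp_zero, mul_neg, intervalIntegral.integral_neg] at h
  rw [intervalIntegral.integral_symm 1, ← h, neg_neg]

theorem intervalIntegral.integral_eq_two_mul_integral_half_of_symm {f : ℝ → ℝ} {a : ℝ}
    (hf : IntervalIntegrable f volume 0 a) (hsymm : ∀ x, f (a - x) = f x) :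
    ∫ x in 0..a, f x = 2 * ∫ x in 0..a / 2, f x := by
  have hmid : a / 2 ∈ uIcc 0 a := by
    rcases le_total 0 a with h | h
    · exact mem_uIcc.2 (Or.inl ⟨by linarith, by linarith⟩)
    · exact mem_uIcc.2 (Or.inr ⟨by linarith, by linarith⟩)
  have hsecond : ∫ x in a / 2..a, f x = ∫ x in 0..a / 2, f x := by
    simpa [hsymm, show a - a / 2 = a / 2 by ring] using
      (intervalIntegral.integral_comp_sub_left f a (a := 0) (b := a / 2)).symm
  rw [← intervalIntegral.integral_add_adjacent_intervals
    (hf.mono_set (uIcc_subset_uIcc left_mem_uIcc hmid))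
    (hf.mono_set (uIcc_subset_uIcc hmid right_mem_uIcc)), hsecond]
  ring

theorem intervalIntegral_tendsto_integral_Ioi_of_dominated_convergence {ι : Type*}
    {l : Filter ι} [l.IsCountablyGenerated] {F : ι → ℝ → ℝ} {f bound : ℝ → ℝ} {a : ℝ}
    {b : ι → ℝ} (hb : Tendsto b l atTop)
    (hF_meas : ∀ᶠ i in l, AEStronglyMeasurable (F i) (volume.restrict (Ioi a)))
    (h_bound : ∀ᶠ i in l, ∀ t ∈ Ioc a (b i), ‖F i t‖ ≤ bound t)
    (bound_integrable : IntegrableOn bound (Ioi a))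
    (h_lim : ∀ t > a, Tendsto (fun i => F i t) l (𝓝 (f t))) :
    Tendsto (fun i => ∫ t in a..b i, F i t) l (𝓝 (∫ t in Ioi a, f t)) := by
  have h_trunc : Tendsto (fun i => ∫ t in Ioi a, (Iic (b i)).indicator (F i) t) l
      (𝓝 (∫ t in Ioi a, f t)) := by
    refine MeasureTheory.tendsto_integral_filter_of_dominated_convergence (fun t => ‖bound t‖)
      ?_ ?_ bound_integrable.norm ?_
    · filter_upwards [hF_meas] with i hi
      exact hi.indicator measurableSet_Iic
    · filter_upwards [h_bound] with i hi
      refine (ae_restrict_iff' measurableSet_Ioi).2 (Eventually.of_forall fun t ht => ?_)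
      by_cases htb : t ∈ Iic (b i)
      · rw [indicator_of_mem htb]
        exact (hi t ⟨ht, htb⟩).trans (le_norm_self _)
      · rw [indicator_of_notMem htb, norm_zero]
        exact norm_nonneg _
    · filter_upwards [ae_restrict_mem measurableSet_Ioi] with t ht
      refine (h_lim t ht).congr' ?_
      filter_upwards [hb.eventually_ge_atTop t] with i hi
      rw [indicator_of_mem (mem_Iic.2 hi)]
  refine h_trunc.congr' ?_
  filter_upwards [hb.eventually_ge_atTop a] with i hi
  rw [setIntegral_indicator measurableSet_Iic, Ioi_inter_Iic, intervalIntegral.integral_of_le hi]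

theorem tendsto_integral_exp_quadratic_half :
    Tendsto (fun α : ℝ => ∫ t in 0..α / 2, exp (4 * t ^ 2 / α - 4 * t)) atTop (𝓝 (1 / 4)) := by
  have h := intervalIntegral_tendsto_integral_Ioi_of_dominated_convergence
    (F := fun α t => exp (4 * t ^ 2 / α - 4 * t)) (f := fun t => exp (-4 * t))
    (bound := fun t => exp (-2 * t)) (a := 0) (tendsto_id.atTop_div_const two_pos)
    (Eventually.of_forall fun α => (by fun_prop : Continuous _).aestronglyMeasurable) ?_
    (integrableOn_exp_mul_Ioi (by norm_num) 0) ?_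
  · rwa [integral_exp_mul_Ioi (by norm_num), mul_zero, exp_zero, neg_div_neg_eq] at h
  · filter_upwards [eventually_gt_atTop 0] with α hα t ⟨ht, htα⟩
    have htα' : 2 * t ≤ α := by rw [id] at htα; linarith
    have hquad : 4 * t ^ 2 / α ≤ 2 * t := by
      rw [div_le_iff₀ hα]
      nlinarith
    rw [norm_of_nonneg (exp_pos _).le, exp_le_exp]
    linarith
  · intro t _
    have h0 : Tendsto (fun α : ℝ => 4 * t ^ 2 / α) atTop (𝓝 0) :=
      tendsto_const_nhds.div_atTop tendsto_id
    simpa [neg_mul, sub_eq_neg_add] using (h0.sub_const (4 * t)).rexp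

/-- As `α → ∞`, `∫_{e^{-α}}^{1} r³ e^{(4/α)(log r)²} dr → 1/2`. -/
theorem integral_r3_exp_log_sq_tendsto :
    Tendsto
      (fun α : ℝ => ∫ r in (Real.exp (-α))..1, r ^ 3 * Real.exp ((4 / α) * (Real.log r) ^ 2))
      atTop (nhds (1 / 2)) := by
  rw [show (1 / 2 : ℝ) = 2 * (1 / 4) by norm_num]
  refine (tendsto_integral_exp_quadratic_half.const_mul 2).congr' ?_
  filter_upwards [eventually_gt_atTop 0] with α hα
  have hcont : ContinuousOn (fun r : ℝ => r ^ 3 * exp (4 / α * log r ^ 2)) (Ioi 0) :=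
    (continuousOn_pow 3).mul (continuous_exp.comp_continuousOn
      (continuousOn_const.mul ((continuousOn_log.mono fun _ hx => (mem_Ioi.1 hx).ne').pow 2)))
  have hsymm (t : ℝ) : exp (4 * (α - t) ^ 2 / α - 4 * (α - t)) = exp (4 * t ^ 2 / α - 4 * t) := by
    congr 1
    field_simp
    ring
  calc 2 * ∫ t in 0..α / 2, exp (4 * t ^ 2 / α - 4 * t)
      = ∫ t in 0..α, exp (4 * t ^ 2 / α - 4 * t) :=
        (intervalIntegral.integral_eq_two_mul_integral_half_of_symm
          ((by fun_prop : Continuous _).intervalIntegrable _ _) hsymm).symm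
    _ = ∫ r in exp (-α)..1, r ^ 3 * exp (4 / α * log r ^ 2) := by
        rw [← intervalIntegral.integral_comp_exp_neg_mul_exp_neg _ hcont]
        congr 1 with t
        rw [log_exp, ← exp_nat_mul, ← exp_add, ← exp_add]
        congr 1
        ring
end

section
/- With f_α as above, |Δf_α|² converges to the Dirac mass δ₀ at the origin in the sense of distributions on ℝ⁴ as α → ∞: for every smooth compactly supported φ, ∫_{ℝ⁴} |Δf_α(x)|² φ(x) dx → φ(0), assuming additionally that on |x| > 1, f_α equals a smooth compactly supported η_α with ‖Δη_α‖_{L^∞} ≤ C/√α. -/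
open MeasureTheory Real Filter Metric Set

local notation "E4" => EuclideanSpace ℝ (Fin 4)


lemma gamma3 : Real.Gamma ((Fintype.card (Fin 4)) / 2 + 1) = 2 := by
  have : ((Fintype.card (Fin 4) : ℝ) / 2 + 1) = ((2:ℕ) + 1 : ℝ) := by
    norm_num [Fintype.card_fin]
  rw [this, Real.Gamma_nat_eq_factorial]
  norm_num

lemma sqrtpi4 : Real.sqrt π ^ Fintype.card (Fin 4) = π ^ 2 := by
  rw [Fintype.card_fin, show (4 : ℕ) = 2 * 2 by norm_num, pow_mul, Real.sq_sqrt pi_nonneg]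

lemma vol_ball4' (r : ℝ) (hr : 0 ≤ r) :
    (volume (Metric.ball (0 : E4) r)).toReal = r ^ 4 * (π ^ 2 / 2) := by
  rw [EuclideanSpace.volume_ball, gamma3, sqrtpi4]
  rw [ENNReal.toReal_mul, ← ENNReal.ofReal_pow hr, ENNReal.toReal_ofReal (by positivity),
    ENNReal.toReal_ofReal (by positivity)]
  norm_num [Fintype.card_fin]

lemma vol_ball4 (r : ℝ) (hr : 0 ≤ r) :
    (volume (Metric.closedBall (0 : E4) r)).toReal = r ^ 4 * (π ^ 2 / 2) := by
  rw [Measure.addHaar_closedBall_eq_addHaar_ball, vol_ball4' r hr]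

lemma radial4 (a : ℝ) (ha : 0 < a) (g : ℝ → ℝ) :
    ∫ x : E4 in Metric.closedBall 0 1 \ Metric.closedBall 0 a, g ‖x‖
      = 2 * π ^ 2 * ∫ r in Set.Ioc a 1, r ^ 3 * g r := by
  have hS : MeasurableSet (Metric.closedBall (0:E4) 1 \ Metric.closedBall 0 a) :=
    measurableSet_closedBall.diff measurableSet_closedBall
  rw [← integral_indicator hS]
  have h1 : ∀ x : E4, (Metric.closedBall (0:E4) 1 \ Metric.closedBall 0 a).indicator
      (fun x => g ‖x‖) x = (Set.Ioc a 1).indicator g ‖x‖ := by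
    intro x
    by_cases h : ‖x‖ ∈ Set.Ioc a 1
    · rw [Set.indicator_of_mem h, Set.indicator_of_mem]
      simp only [Set.mem_diff, mem_closedBall_zero_iff, not_le]
      exact ⟨h.2, by simpa using h.1.not_ge⟩
    · rw [Set.indicator_of_notMem h, Set.indicator_of_notMem]
      intro hx
      simp only [Set.mem_diff, mem_closedBall_zero_iff, not_le] at hx
      exact h ⟨hx.2, hx.1⟩
  simp_rw [h1]
  rw [MeasureTheory.integral_fun_norm_addHaar volume ((Set.Ioc a 1).indicator g)]
  have hdim : Module.finrank ℝ E4 = 4 := finrank_euclideanSpace_fin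
  rw [hdim, measureReal_def, vol_ball4' 1 zero_le_one]
  have h2 : ∀ r : ℝ, r ^ (4 - 1) • (Set.Ioc a 1).indicator g r
      = (Set.Ioc a 1).indicator (fun r => r ^ 3 * g r) r := by
    intro r
    by_cases h : r ∈ Set.Ioc a 1
    · simp [Set.indicator_of_mem h, smul_eq_mul]
    · simp [Set.indicator_of_notMem h]
  simp_rw [h2]
  rw [MeasureTheory.setIntegral_indicator measurableSet_Ioc]
  have : Set.Ioi (0:ℝ) ∩ Set.Ioc a 1 = Set.Ioc a 1 := by
    apply Set.inter_eq_right.mpr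
    exact fun r hr => lt_trans ha hr.1
  rw [this]
  simp only [smul_eq_mul, nsmul_eq_mul]
  push_cast
  ring



lemma J4 (a : ℝ) (ha : 0 < a) (ha1 : a ≤ 1) :
    ∫ x : E4 in Metric.closedBall 0 1 \ Metric.closedBall 0 a, (‖x‖ ^ 4)⁻¹
      = 2 * π ^ 2 * Real.log (1 / a) := by
  rw [radial4 a ha (fun r => (r ^ 4)⁻¹)]
  congr 1
  have : ∀ r ∈ Set.Ioc a 1, r ^ 3 * (r ^ 4)⁻¹ = r⁻¹ := by
    intro r hr
    have hr0 : r ≠ 0 := (lt_trans ha hr.1).ne'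
    field_simp
  rw [setIntegral_congr_fun measurableSet_Ioc this,
    ← intervalIntegral.integral_of_le ha1, integral_inv_of_pos ha one_pos]

lemma J3 (a : ℝ) (ha : 0 < a) (ha1 : a ≤ 1) :
    ∫ x : E4 in Metric.closedBall 0 1 \ Metric.closedBall 0 a, (‖x‖ ^ 3)⁻¹
      = 2 * π ^ 2 * (1 - a) := by
  rw [radial4 a ha (fun r => (r ^ 3)⁻¹)]
  congr 1
  have : ∀ r ∈ Set.Ioc a 1, r ^ 3 * (r ^ 3)⁻¹ = 1 := by
    intro r hr
    have hr0 : r ≠ 0 := (lt_trans ha hr.1).ne'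
    field_simp
  rw [setIntegral_congr_fun measurableSet_Ioc this]
  simp [Real.volume_Ioc, ENNReal.toReal_ofReal (by linarith : (0:ℝ) ≤ 1 - a), ha1]

-- integrability helper
lemma intOnS2 (a : ℝ) (f : E4 → ℝ) (hf : AEStronglyMeasurable f volume) (B : ℝ)
    (hB : ∀ x ∈ Metric.closedBall (0:E4) 1 \ Metric.closedBall 0 a, |f x| ≤ B) :
    IntegrableOn f (Metric.closedBall (0:E4) 1 \ Metric.closedBall 0 a) volume := by
  have hS : MeasurableSet (Metric.closedBall (0:E4) 1 \ Metric.closedBall 0 a) :=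
    measurableSet_closedBall.diff measurableSet_closedBall
  apply Measure.integrableOn_of_bounded (M := B)
  · exact ((measure_mono Set.diff_subset).trans_lt measure_closedBall_lt_top).ne
  · exact hf
  · rw [ae_restrict_iff' hS]
    exact Filter.Eventually.of_forall (fun x hx => by simpa using hB x hx)


lemma main_est (α : ℝ) (hα : 1 ≤ α) (d : E4 → ℝ) (hd_cont : Continuous d)
    (K : Set E4) (hK : IsCompact K) (hd_supp : Function.support d ⊆ K)
    (C : ℝ) (hd_bound : ∀ x, |d x| ≤ C / Real.sqrt α)
    (φ : E4 → ℝ) (hφc : Continuous φ) (hφsupp : HasCompactSupport φ)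
    (M : ℝ) (hM : ∀ x, |φ x| ≤ M)
    (L : ℝ) (hL0 : 0 ≤ L) (hL : ∀ x : E4, |φ x - φ 0| ≤ L * ‖x‖) :
    |(∫ x : E4,
        (if ‖x‖ ≤ Real.exp (-α) then 8 * Real.exp (2 * α) / Real.sqrt (32 * π ^ 2 * α)
          else if ‖x‖ ≤ 1 then 2 / (‖x‖ ^ 2 * Real.sqrt (8 * π ^ 2 * α))
          else d x) ^ 2 * φ x) - φ 0|
      ≤ (M + L + C ^ 2 * M * (volume K).toReal) / α := by
  have hα0 : (0:ℝ) < α := lt_of_lt_of_le one_pos hα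
  have hM0 : (0:ℝ) ≤ M := le_trans (abs_nonneg _) (hM 0)
  set a : ℝ := Real.exp (-α) with ha_def
  have ha : 0 < a := Real.exp_pos _
  have ha1 : a ≤ 1 := Real.exp_le_one_iff.mpr (by linarith)
  set A : ℝ := 8 * Real.exp (2 * α) / Real.sqrt (32 * π ^ 2 * α) with hA_def
  set s : ℝ := Real.sqrt (8 * π ^ 2 * α) with hs_def
  have hs2 : s ^ 2 = 8 * π ^ 2 * α := Real.sq_sqrt (by positivity)
  have hs0 : 0 < s := Real.sqrt_pos.mpr (by positivity)
  set S1 : Set E4 := Metric.closedBall 0 a with hS1_def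
  set S2 : Set E4 := Metric.closedBall 0 1 \ Metric.closedBall 0 a with hS2_def
  set S3 : Set E4 := (Metric.closedBall (0:E4) 1)ᶜ with hS3_def
  have hS1m : MeasurableSet S1 := measurableSet_closedBall
  have hS2m : MeasurableSet S2 := measurableSet_closedBall.diff measurableSet_closedBall
  have hS3m : MeasurableSet S3 := measurableSet_closedBall.compl
  set f1 : E4 → ℝ := fun x => A ^ 2 * φ x with hf1_def
  set f2 : E4 → ℝ := fun x => (2 / (‖x‖ ^ 2 * s)) ^ 2 * φ x with hf2_def
  set f3 : E4 → ℝ := fun x => d x ^ 2 * φ x with hf3_def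
  -- pointwise decomposition
  have hdecomp : ∀ x : E4,
      (if ‖x‖ ≤ a then A else if ‖x‖ ≤ 1 then 2 / (‖x‖ ^ 2 * s) else d x) ^ 2 * φ x
        = S1.indicator f1 x + S2.indicator f2 x + S3.indicator f3 x := by
    intro x
    by_cases h1 : ‖x‖ ≤ a
    · have hx1 : x ∈ S1 := mem_closedBall_zero_iff.mpr h1
      have hx2 : x ∉ S2 := fun h => h.2 hx1
      have hx3 : x ∉ S3 := fun h => h (mem_closedBall_zero_iff.mpr (h1.trans ha1))
      rw [Set.indicator_of_mem hx1, Set.indicator_of_notMem hx2,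
        Set.indicator_of_notMem hx3, if_pos h1]
      simp [f1]
    · by_cases h2 : ‖x‖ ≤ 1
      · have hx1 : x ∉ S1 := fun h => h1 (mem_closedBall_zero_iff.mp h)
        have hx2 : x ∈ S2 := ⟨mem_closedBall_zero_iff.mpr h2, hx1⟩
        have hx3 : x ∉ S3 := fun h => h (mem_closedBall_zero_iff.mpr h2)
        rw [Set.indicator_of_notMem hx1, Set.indicator_of_mem hx2,
          Set.indicator_of_notMem hx3, if_neg h1, if_pos h2]
        simp [f2]
      · have hx1 : x ∉ S1 := fun h => h1 (mem_closedBall_zero_iff.mp h)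
        have hx2 : x ∉ S2 := fun h => h2 (mem_closedBall_zero_iff.mp h.1)
        have hx3 : x ∈ S3 := fun h => h2 (mem_closedBall_zero_iff.mp h)
        rw [Set.indicator_of_notMem hx1, Set.indicator_of_notMem hx2,
          Set.indicator_of_mem hx3, if_neg h1, if_neg h2]
        simp [f3]
  -- integrabilities
  have hφint : Integrable φ := hφc.integrable_of_hasCompactSupport hφsupp
  have hi1 : Integrable (S1.indicator f1) := (hφint.const_mul _).indicator hS1m
  have hf2meas : AEStronglyMeasurable f2 volume := by
    apply Measurable.aestronglyMeasurable
    have h := hφc.measurable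
    fun_prop
  have hf2on : IntegrableOn f2 S2 volume := by
    apply intOnS2 a f2 hf2meas ((2 / (a ^ 2 * s)) ^ 2 * M)
    intro x hx
    have hxa : a < ‖x‖ := by
      by_contra h
      exact hx.2 (mem_closedBall_zero_iff.mpr (not_lt.mp h))
    have hxn : (0:ℝ) < ‖x‖ := ha.trans hxa
    rw [abs_mul, abs_of_nonneg (sq_nonneg _)]
    apply mul_le_mul _ (hM x) (abs_nonneg _) (by positivity)
    apply pow_le_pow_left₀ (by positivity)
    apply div_le_div_of_nonneg_left (by norm_num) (by positivity)
    apply mul_le_mul_of_nonneg_right _ hs0.le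
    exact pow_le_pow_left₀ ha.le hxa.le 2
  have hi2 : Integrable (S2.indicator f2) := (integrable_indicator_iff hS2m).mpr hf2on
  have hf3cont : Continuous f3 := (hd_cont.pow 2).mul hφc
  have hf3supp : HasCompactSupport f3 := hφsupp.mul_left
  have hi3 : Integrable (S3.indicator f3) :=
    (hf3cont.integrable_of_hasCompactSupport hf3supp).indicator hS3m
  -- split the integral
  have hsplit : (∫ x : E4,
      (if ‖x‖ ≤ a then A else if ‖x‖ ≤ 1 then 2 / (‖x‖ ^ 2 * s) else d x) ^ 2 * φ x)
      = (∫ x in S1, f1 x) + (∫ x in S2, f2 x) + (∫ x in S3, f3 x) := by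
    have hi12 : Integrable (fun x => S1.indicator f1 x + S2.indicator f2 x) := hi1.add hi2
    rw [integral_congr_ae (Filter.Eventually.of_forall hdecomp),
      integral_add hi12 hi3, integral_add hi1 hi2, integral_indicator hS1m,
      integral_indicator hS2m, integral_indicator hS3m]
  have hxprop : ∀ x ∈ S2, a < ‖x‖ := fun x hx =>
    lt_of_not_ge (fun h => hx.2 (mem_closedBall_zero_iff.mpr h))
  -- Bound on I1
  have hI1 : |∫ x in S1, f1 x| ≤ M / α := by
    have hb : ∀ x ∈ S1, ‖f1 x‖ ≤ A ^ 2 * M := by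
      intro x _
      rw [Real.norm_eq_abs, abs_mul, abs_of_nonneg (sq_nonneg A)]
      exact mul_le_mul_of_nonneg_left (hM x) (sq_nonneg A)
    have h := norm_setIntegral_le_of_norm_le_const (μ := volume) (s := S1)
      measure_closedBall_lt_top hb
    rw [Real.norm_eq_abs] at h
    refine h.trans ?_
    rw [hS1_def, measureReal_def, vol_ball4 a ha.le]
    have hA2 : A ^ 2 = 64 * Real.exp (2 * α) ^ 2 / (32 * π ^ 2 * α) := by
      rw [hA_def, div_pow, Real.sq_sqrt (by positivity)]; ring
    have he : Real.exp (2 * α) ^ 2 * Real.exp (-α) ^ 4 = 1 := by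
      rw [← Real.exp_nat_mul, ← Real.exp_nat_mul, ← Real.exp_add]
      norm_num
      ring
    have heq : 64 * Real.exp (2 * α) ^ 2 / (32 * π ^ 2 * α) * M *
        (Real.exp (-α) ^ 4 * (π ^ 2 / 2))
        = M / α * (Real.exp (2 * α) ^ 2 * Real.exp (-α) ^ 4) := by
      field_simp; ring
    rw [hA2, ha_def, heq, he, mul_one]
  -- Bound on I3
  have hI3 : |∫ x in S3, f3 x| ≤ C ^ 2 * M * (volume K).toReal / α := by
    have hind : ∀ x, K.indicator f3 x = f3 x := by
      intro x
      by_cases hx : x ∈ K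
      · rw [Set.indicator_of_mem hx]
      · rw [Set.indicator_of_notMem hx]
        have hd0 : d x = 0 := by
          by_contra h
          exact hx (hd_supp h)
        simp [hf3_def, hd0]
    have e0 : (∫ x in S3, f3 x) = ∫ x in S3 ∩ K, f3 x := by
      rw [← setIntegral_indicator hK.measurableSet]
      exact integral_congr_ae (Filter.Eventually.of_forall fun x => (hind x).symm)
    have hb : ∀ x ∈ S3 ∩ K, ‖f3 x‖ ≤ C ^ 2 / α * M := by
      intro x _
      rw [Real.norm_eq_abs, abs_mul, abs_of_nonneg (sq_nonneg _)]
      have hd2 : d x ^ 2 ≤ C ^ 2 / α := by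
        have h1 : d x ^ 2 = |d x| ^ 2 := (sq_abs _).symm
        have h2 : |d x| ^ 2 ≤ (C / Real.sqrt α) ^ 2 :=
          pow_le_pow_left₀ (abs_nonneg _) (hd_bound x) 2
        rw [h1]
        refine h2.trans_eq ?_
        rw [div_pow, Real.sq_sqrt hα0.le]
      exact mul_le_mul hd2 (hM x) (abs_nonneg _) (by positivity)
    have hfin : volume (S3 ∩ K) < ⊤ :=
      (measure_mono Set.inter_subset_right).trans_lt hK.measure_lt_top
    have h := norm_setIntegral_le_of_norm_le_const (μ := volume) hfin hb
    rw [Real.norm_eq_abs, measureReal_def] at h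
    rw [e0]
    refine h.trans ?_
    have ht : (volume (S3 ∩ K)).toReal ≤ (volume K).toReal :=
      ENNReal.toReal_mono hK.measure_lt_top.ne (measure_mono Set.inter_subset_right)
    calc C ^ 2 / α * M * (volume (S3 ∩ K)).toReal
        ≤ C ^ 2 / α * M * (volume K).toReal :=
          mul_le_mul_of_nonneg_left ht (by positivity)
      _ = C ^ 2 * M * (volume K).toReal / α := by ring
  -- Analysis of I2
  have hI2 : |(∫ x in S2, f2 x) - φ 0| ≤ L / α := by
    have hcong : ∀ x ∈ S2, f2 x = 1 / (2 * π ^ 2 * α) * ((‖x‖ ^ 4)⁻¹ * φ x) := by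
      intro x hx
      have hxn : (0:ℝ) < ‖x‖ := ha.trans (hxprop x hx)
      have h2 : (2 / (‖x‖ ^ 2 * s)) ^ 2 = 1 / (2 * π ^ 2 * α) * (‖x‖ ^ 4)⁻¹ := by
        rw [div_pow, mul_pow, hs2]
        field_simp
        ring
      show (2 / (‖x‖ ^ 2 * s)) ^ 2 * φ x = _
      rw [h2]; ring
    have e1 : (∫ x in S2, f2 x)
        = 1 / (2 * π ^ 2 * α) * ∫ x in S2, (‖x‖ ^ 4)⁻¹ * φ x := by
      rw [setIntegral_congr_fun hS2m hcong, integral_const_mul]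
    have hmeas4 : AEStronglyMeasurable (fun x : E4 => (‖x‖ ^ 4)⁻¹) volume := by
      apply Measurable.aestronglyMeasurable; fun_prop
    have hinv : ∀ x ∈ S2, ((‖x‖:ℝ) ^ 4)⁻¹ ≤ (a ^ 4)⁻¹ := by
      intro x hx
      exact inv_anti₀ (by positivity)
        (pow_le_pow_left₀ ha.le (hxprop x hx).le 4)
    have hint4 : IntegrableOn (fun x : E4 => (‖x‖ ^ 4)⁻¹ * φ 0) S2 := by
      apply intOnS2 a _ (by apply Measurable.aestronglyMeasurable; fun_prop)
        ((a ^ 4)⁻¹ * |φ 0|)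
      intro x hx
      rw [abs_mul, abs_of_nonneg (by positivity : (0:ℝ) ≤ (‖x‖ ^ 4)⁻¹)]
      exact mul_le_mul_of_nonneg_right (hinv x hx) (abs_nonneg _)
    have hint4' : IntegrableOn (fun x : E4 => (‖x‖ ^ 4)⁻¹ * (φ x - φ 0)) S2 := by
      have hm : Measurable φ := hφc.measurable
      apply intOnS2 a _ (by apply Measurable.aestronglyMeasurable; fun_prop)
        ((a ^ 4)⁻¹ * L)
      intro x hx
      rw [abs_mul, abs_of_nonneg (by positivity : (0:ℝ) ≤ (‖x‖ ^ 4)⁻¹)]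
      have hx1 : ‖x‖ ≤ 1 := mem_closedBall_zero_iff.mp hx.1
      have := (hL x).trans (by nlinarith [norm_nonneg x] : L * ‖x‖ ≤ L)
      exact mul_le_mul (hinv x hx) this (abs_nonneg _) (by positivity)
    have e2 : (∫ x in S2, (‖x‖ ^ 4)⁻¹ * φ x)
        = (∫ x in S2, ((‖x‖:ℝ) ^ 4)⁻¹) * φ 0
          + ∫ x in S2, (‖x‖ ^ 4)⁻¹ * (φ x - φ 0) := by
      rw [← integral_mul_const, ← integral_add hint4 hint4']
      apply setIntegral_congr_fun hS2m
      intro x _; ring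
    have e3 : (∫ x in S2, ((‖x‖:ℝ) ^ 4)⁻¹) = 2 * π ^ 2 * α := by
      rw [hS2_def, J4 a ha ha1, one_div, Real.log_inv, ha_def, Real.log_exp]; ring
    have herr : |∫ x in S2, (‖x‖ ^ 4)⁻¹ * (φ x - φ 0)| ≤ L * (2 * π ^ 2 * (1 - a)) := by
      have hgint : IntegrableOn (fun x : E4 => L * (‖x‖ ^ 3)⁻¹) S2 := by
        apply intOnS2 a _ (by apply Measurable.aestronglyMeasurable; fun_prop)
          (L * (a ^ 3)⁻¹)
        intro x hx
        rw [abs_mul, abs_of_nonneg hL0,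
          abs_of_nonneg (by positivity : (0:ℝ) ≤ (‖x‖ ^ 3)⁻¹)]
        exact mul_le_mul_of_nonneg_left
          (inv_anti₀ (by positivity) (pow_le_pow_left₀ ha.le (hxprop x hx).le 3)) hL0
      have hb : ∀ᵐ x ∂(volume.restrict S2),
          ‖(‖x‖ ^ 4)⁻¹ * (φ x - φ 0)‖ ≤ L * (‖x‖ ^ 3)⁻¹ := by
        rw [ae_restrict_iff' hS2m]
        apply Filter.Eventually.of_forall
        intro x hx
        have hxn : (0:ℝ) < ‖x‖ := ha.trans (hxprop x hx)
        rw [Real.norm_eq_abs, abs_mul,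
          abs_of_nonneg (by positivity : (0:ℝ) ≤ (‖x‖ ^ 4)⁻¹)]
        calc (‖x‖ ^ 4)⁻¹ * |φ x - φ 0| ≤ (‖x‖ ^ 4)⁻¹ * (L * ‖x‖) :=
              mul_le_mul_of_nonneg_left (hL x) (by positivity)
          _ = L * (‖x‖ ^ 3)⁻¹ := by field_simp
      have h := norm_integral_le_of_norm_le hgint hb
      rw [Real.norm_eq_abs] at h
      refine h.trans ?_
      rw [integral_const_mul]
      rw [hS2_def, J3 a ha ha1]
    have e4 : (∫ x in S2, f2 x) - φ 0
        = 1 / (2 * π ^ 2 * α) * ∫ x in S2, (‖x‖ ^ 4)⁻¹ * (φ x - φ 0) := by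
      rw [e1, e2, e3]
      field_simp
      ring
    rw [e4, abs_mul, abs_of_nonneg (by positivity : (0:ℝ) ≤ 1 / (2 * π ^ 2 * α))]
    calc 1 / (2 * π ^ 2 * α) * |∫ x in S2, (‖x‖ ^ 4)⁻¹ * (φ x - φ 0)|
        ≤ 1 / (2 * π ^ 2 * α) * (L * (2 * π ^ 2 * (1 - a))) :=
          mul_le_mul_of_nonneg_left herr (by positivity)
      _ = L * (1 - a) / α := by field_simp
      _ ≤ L / α := by
          gcongr
          nlinarith [ha.le]
  -- Combine
  rw [hsplit]
  have harr : (∫ x in S1, f1 x) + (∫ x in S2, f2 x) + (∫ x in S3, f3 x) - φ 0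
      = (∫ x in S1, f1 x) + ((∫ x in S2, f2 x) - φ 0) + (∫ x in S3, f3 x) := by ring
  rw [harr]
  calc |(∫ x in S1, f1 x) + ((∫ x in S2, f2 x) - φ 0) + (∫ x in S3, f3 x)|
      ≤ |(∫ x in S1, f1 x) + ((∫ x in S2, f2 x) - φ 0)| + |∫ x in S3, f3 x| := abs_add_le _ _
    _ ≤ |∫ x in S1, f1 x| + |(∫ x in S2, f2 x) - φ 0| + |∫ x in S3, f3 x| :=
        add_le_add_left (abs_add_le _ _) _
    _ ≤ M / α + L / α + C ^ 2 * M * (volume K).toReal / α :=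
        add_le_add (add_le_add hI1 hI2) hI3
    _ = (M + L + C ^ 2 * M * (volume K).toReal) / α := by ring

/-- `|Δf_α|² → δ₀` in `𝒟'(ℝ⁴)` as `α → ∞`: with
`Δf_α(x) = -8e^{2α}/√(32π²α)` for `|x| ≤ e^{-α}`, `Δf_α(x) = -2/(|x|²√(8π²α))` for
`e^{-α} < |x| ≤ 1`, and `Δf_α = Δη_α` for `|x| > 1` with `η_α` smooth, supported in a fixed
compact set and `‖Δη_α‖_{L^∞} ≤ C/√α`, one has
`∫_{ℝ⁴} |Δf_α(x)|² φ(x) dx → φ(0)` for every test function `φ`. -/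
theorem laplacian_sq_tendsto_dirac
    (Δη : ℝ → EuclideanSpace ℝ (Fin 4) → ℝ)
    (hcont : ∀ α, Continuous (Δη α))
    (K : Set (EuclideanSpace ℝ (Fin 4))) (hK : IsCompact K)
    (hsupp : ∀ α, Function.support (Δη α) ⊆ K)
    (C : ℝ) (hC : ∀ α > (0 : ℝ), ∀ x, |Δη α x| ≤ C / Real.sqrt α)
    (φ : EuclideanSpace ℝ (Fin 4) → ℝ)
    (hφ : ContDiff ℝ (⊤ : ℕ∞) φ) (hφsupp : HasCompactSupport φ) :
    Tendsto
      (fun α : ℝ => ∫ x : EuclideanSpace ℝ (Fin 4),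
        (if ‖x‖ ≤ Real.exp (-α) then 8 * Real.exp (2 * α) / Real.sqrt (32 * π ^ 2 * α)
          else if ‖x‖ ≤ 1 then 2 / (‖x‖ ^ 2 * Real.sqrt (8 * π ^ 2 * α))
          else Δη α x) ^ 2 * φ x)
      atTop (nhds (φ 0)) := by
  obtain ⟨M, hM⟩ := hφsupp.exists_bound_of_continuous hφ.continuous
  obtain ⟨L, hLip⟩ := hφ.lipschitzWith_of_hasCompactSupport hφsupp (by simp)
  have hL : ∀ x : E4, |φ x - φ 0| ≤ (L : ℝ) * ‖x‖ := by
    intro x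
    have h := hLip.dist_le_mul x 0
    simpa [Real.dist_eq, dist_zero_right] using h
  have hkey : ∀ α : ℝ, 1 ≤ α →
      |(∫ x : E4,
        (if ‖x‖ ≤ Real.exp (-α) then 8 * Real.exp (2 * α) / Real.sqrt (32 * π ^ 2 * α)
          else if ‖x‖ ≤ 1 then 2 / (‖x‖ ^ 2 * Real.sqrt (8 * π ^ 2 * α))
          else Δη α x) ^ 2 * φ x) - φ 0|
      ≤ (M + (L : ℝ) + C ^ 2 * M * (volume K).toReal) / α := by
    intro α hα
    exact main_est α hα (Δη α) (hcont α) K hK (hsupp α) C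
      (hC α (lt_of_lt_of_le one_pos hα)) φ hφ.continuous hφsupp M
      (fun x => by simpa using hM x) L L.coe_nonneg hL
  rw [tendsto_iff_dist_tendsto_zero]
  refine squeeze_zero'
    (g := fun α : ℝ => (M + (L : ℝ) + C ^ 2 * M * (volume K).toReal) / α)
    (Filter.Eventually.of_forall fun α => dist_nonneg) ?_
    (tendsto_const_nhds.div_atTop tendsto_id)
  filter_upwards [eventually_ge_atTop (1 : ℝ)] with α hα
  rw [Real.dist_eq]
  exact hkey α hα
end

section
/- Let r_α(x) = (1 - |x|² e^{2α})/√(32π²α) for |x| ≤ e^{-α} and r_α(x) = 0 for e^{-α} < |x| ≤ 1. Then for every fixed λ > 0, ∫_{|x| ≤ e^{-α}} (e^{|r_α(x)|²/λ²} - 1) dx → 0 as α → ∞. -/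
open MeasureTheory Real Filter Set

/-!
On the ball `|x| ≤ e^{-α}` we have `0 ≤ |x|² e^{2α} ≤ 1`, so for `α ≥ 1` the exponent
`|r_α(x)|²/λ²` is bounded by the constant `C = 1/(32π²λ²)`. Hence the integrand is at most
`(e^C - 1) r³`, and the integral is at most `2π² (e^C - 1) e^{-4α}/4 → 0`.
-/

lemma integral_exp_sub_one_mul_pow_nonneg {g : ℝ → ℝ} {b : ℝ} (n : ℕ) (hb : 0 ≤ b)
    (hg : ∀ r ∈ Icc 0 b, 0 ≤ g r) :
    0 ≤ ∫ r in (0 : ℝ)..b, (exp (g r) - 1) * r ^ n :=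
  intervalIntegral.integral_nonneg hb fun r hr =>
    mul_nonneg (sub_nonneg.mpr (one_le_exp (hg r hr))) (pow_nonneg hr.1 n)

lemma integral_exp_sub_one_mul_pow_le {g : ℝ → ℝ} {b C : ℝ} (n : ℕ) (hb : 0 ≤ b)
    (hg : Continuous g) (hgC : ∀ r ∈ Icc 0 b, g r ≤ C) :
    ∫ r in (0 : ℝ)..b, (exp (g r) - 1) * r ^ n ≤ (exp C - 1) * (b ^ (n + 1) / (n + 1)) := by
  have hmono : ∫ r in (0 : ℝ)..b, (exp (g r) - 1) * r ^ n
      ≤ ∫ r in (0 : ℝ)..b, (exp C - 1) * r ^ n := by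
    refine intervalIntegral.integral_mono_on hb ((by fun_prop : Continuous _).intervalIntegrable _ _)
      ((by fun_prop : Continuous _).intervalIntegrable _ _) fun r hr => ?_
    gcongr
    · exact pow_nonneg hr.1 n
    · exact hgC r hr
  simpa [intervalIntegral.integral_const_mul, integral_pow, zero_pow n.succ_ne_zero] using hmono

lemma sq_mul_exp_two_mul_le_one {r α : ℝ} (hr0 : 0 ≤ r) (hr : r ≤ exp (-α)) :
    r ^ 2 * exp (2 * α) ≤ 1 := by
  have hball : exp (-α) ^ 2 * exp (2 * α) = 1 := by
    rw [← exp_nat_mul, ← exp_add]; norm_num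
  calc r ^ 2 * exp (2 * α) ≤ exp (-α) ^ 2 * exp (2 * α) := by gcongr
    _ = 1 := hball

lemma sq_div_sqrt_div_sq_le {c α t lam : ℝ} (hc : 0 ≤ c) (hα : 1 ≤ α) (ht0 : 0 ≤ t)
    (ht1 : t ≤ 1) :
    ((1 - t) / sqrt (c * α)) ^ 2 / lam ^ 2 ≤ 1 / (c * lam ^ 2) := by
  rw [div_pow, sq_sqrt (by positivity), ← div_div (1 : ℝ)]
  refine div_le_div_of_nonneg_right ?_ (sq_nonneg lam)
  calc (1 - t) ^ 2 / (c * α) ≤ 1 / (c * α) := by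
        gcongr; nlinarith
    _ ≤ 1 / c := by
        rcases hc.eq_or_lt with rfl | hc
        · simp
        · gcongr; nlinarith

theorem remainder_orlicz_tendsto_zero_general (lam : ℝ) :
    Tendsto
      (fun α : ℝ => 2 * π ^ 2 *
        ∫ r in (0 : ℝ)..Real.exp (-α),
          (Real.exp (((1 - r ^ 2 * Real.exp (2 * α)) / Real.sqrt (32 * π ^ 2 * α)) ^ 2
              / lam ^ 2) - 1) * r ^ 3)
      atTop (nhds 0) := by
  set C : ℝ := 1 / (32 * π ^ 2 * lam ^ 2)
  have hbound : Tendsto (fun α : ℝ => 2 * π ^ 2 * ((exp C - 1) * (exp (-α) ^ 4 / 4)))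
      atTop (nhds 0) := by
    have hrad : Tendsto (fun α : ℝ => exp (-α)) atTop (nhds 0) :=
      tendsto_exp_atBot.comp tendsto_neg_atTop_atBot
    simpa using (((hrad.pow 4).div_const 4).const_mul (exp C - 1)).const_mul (2 * π ^ 2)
  refine squeeze_zero' (Eventually.of_forall fun α => ?_) ?_ hbound
  · exact mul_nonneg (by positivity)
      (integral_exp_sub_one_mul_pow_nonneg 3 (exp_pos _).le fun _ _ => by positivity)
  · filter_upwards [eventually_ge_atTop (1 : ℝ)] with α hα
    have hint := integral_exp_sub_one_mul_pow_le (C := C) 3 (exp_pos (-α)).le (by fun_prop)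
      fun r hr => sq_div_sqrt_div_sq_le (by positivity) hα (by positivity)
        (sq_mul_exp_two_mul_le_one hr.1 hr.2)
    norm_num at hint
    gcongr

/-- With `r_α(x) = (1-|x|²e^{2α})/√(32π²α)` for `|x| ≤ e^{-α}`, for every fixed `λ > 0`
`∫_{|x| ≤ e^{-α}} (e^{|r_α|²/λ²} - 1) dx → 0` as `α → ∞`. -/
theorem remainder_orlicz_tendsto_zero (lam : ℝ) (hlam : 0 < lam) :
    Tendsto
      (fun α : ℝ => 2 * π ^ 2 *
        ∫ r in (0 : ℝ)..Real.exp (-α),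
          (Real.exp (((1 - r ^ 2 * Real.exp (2 * α)) / Real.sqrt (32 * π ^ 2 * α)) ^ 2
              / lam ^ 2) - 1) * r ^ 3)
      atTop (nhds 0) :=
  remainder_orlicz_tendsto_zero_general lam
end

section
/- Let g_n(x) = √(α_n/(8π²)) (ψ * ρ_n)(-log|x|/α_n) on ℝ⁴, where (α_n) is a scale (positive reals tending to ∞), ψ is a profile, and ρ_n(s) = α_n ρ(α_n s) with ρ ≥ 0 smooth supported in [-1,1] and ∫ρ = 1. Then ‖Δg_n‖_{L²(ℝ⁴)} ≤ ‖ψ'‖_{L²(ℝ)} (1 + 1/(2α_n) ‖ρ'‖-type constant), in particular ‖Δg_n‖_{L²(ℝ⁴)} ≲ ‖ψ'‖_{L²(ℝ)} uniformly in n. -/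
open MeasureTheory Real Filter
open scoped Convolution ENNReal

/-- `(a+b)^2 ≤ 3a^2 + 3b^2` in `ℝ≥0∞`. -/
private lemma enn_sq_add_le (a b : ℝ≥0∞) : (a + b) ^ 2 ≤ 3 * a ^ 2 + 3 * b ^ 2 := by
  have h : a * b ≤ a ^ 2 + b ^ 2 := by
    rcases le_total a b with h | h
    · calc a * b ≤ b * b := mul_le_mul_left h b
        _ = b ^ 2 := (sq b).symm
        _ ≤ a ^ 2 + b ^ 2 := le_add_self
    · calc a * b ≤ a * a := mul_le_mul_right h a
        _ = a ^ 2 := (sq a).symm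
        _ ≤ a ^ 2 + b ^ 2 := le_self_add
  calc (a + b) ^ 2 = a ^ 2 + b ^ 2 + 2 * (a * b) := by ring
    _ ≤ a ^ 2 + b ^ 2 + 2 * (a ^ 2 + b ^ 2) := by
        exact add_le_add le_rfl (mul_le_mul_right h 2)
    _ = 3 * a ^ 2 + 3 * b ^ 2 := by ring

/-- Cauchy–Schwarz-type bound for `lintegral`. -/
private lemma lint_cs (F G : ℝ → ℝ≥0∞) (hF : Measurable F) (hG : Measurable G) :
    (∫⁻ t, F t * G t) ^ 2 ≤ (∫⁻ t, F t) * ∫⁻ t, F t * G t ^ 2 := by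
  have h22 : (2 : ℝ).HolderConjugate 2 := Real.HolderConjugate.two_two
  have hFm : Measurable fun t => F t ^ ((2 : ℝ)⁻¹) := hF.pow_const _
  have key := ENNReal.lintegral_mul_le_Lp_mul_Lq volume h22
      (f := fun t => F t ^ ((2 : ℝ)⁻¹)) (g := fun t => F t ^ ((2 : ℝ)⁻¹) * G t)
      hFm.aemeasurable (hFm.mul hG).aemeasurable
  have h1 : ∀ t : ℝ,
      ((fun t => F t ^ ((2:ℝ)⁻¹)) * fun t => F t ^ ((2:ℝ)⁻¹) * G t) t = F t * G t := by
    intro t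
    show F t ^ ((2:ℝ)⁻¹) * (F t ^ ((2:ℝ)⁻¹) * G t) = F t * G t
    rw [← mul_assoc, ← ENNReal.rpow_add_of_nonneg _ _ (by norm_num) (by norm_num)]
    norm_num
  have h2 : ∀ t : ℝ, (F t ^ ((2:ℝ)⁻¹)) ^ (2:ℝ) = F t := by
    intro t
    rw [← ENNReal.rpow_mul]
    norm_num
  have h3 : ∀ t : ℝ, (F t ^ ((2:ℝ)⁻¹) * G t) ^ (2:ℝ) = F t * G t ^ 2 := by
    intro t
    rw [ENNReal.mul_rpow_of_nonneg _ _ (by norm_num), h2 t, ENNReal.rpow_two]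
  have key2 : (∫⁻ t, F t * G t) ≤
      (∫⁻ t, F t) ^ ((2:ℝ)⁻¹) * (∫⁻ t, F t * G t ^ 2) ^ ((2:ℝ)⁻¹) := by
    calc (∫⁻ t, F t * G t) = ∫⁻ t, ((fun t => F t ^ ((2:ℝ)⁻¹)) * fun t => F t ^ ((2:ℝ)⁻¹) * G t) t := by
          exact (lintegral_congr h1).symm
      _ ≤ (∫⁻ t, ((fun t => F t ^ ((2:ℝ)⁻¹)) t) ^ (2:ℝ)) ^ ((1:ℝ)/2) *
          (∫⁻ t, ((fun t => F t ^ ((2:ℝ)⁻¹) * G t) t) ^ (2:ℝ)) ^ ((1:ℝ)/2) := key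
      _ = (∫⁻ t, F t) ^ ((2:ℝ)⁻¹) * (∫⁻ t, F t * G t ^ 2) ^ ((2:ℝ)⁻¹) := by
          simp only [h2, h3]
          norm_num
  calc (∫⁻ t, F t * G t) ^ 2
      ≤ ((∫⁻ t, F t) ^ ((2:ℝ)⁻¹) * (∫⁻ t, F t * G t ^ 2) ^ ((2:ℝ)⁻¹)) ^ 2 :=
        pow_le_pow_left₀ zero_le key2 2
    _ = (∫⁻ t, F t) * ∫⁻ t, F t * G t ^ 2 := by
        rw [mul_pow, ← ENNReal.rpow_two, ← ENNReal.rpow_two,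
          ← ENNReal.rpow_mul, ← ENNReal.rpow_mul]
        norm_num

/-- Young's inequality `‖φ ⋆ g‖₂ ≤ ‖φ‖₁ ‖g‖₂` in `lintegral` form. -/
private lemma young12 (φ g : ℝ → ℝ) (hφ : Measurable φ) (hg : Measurable g)
    (hφfin : ∫⁻ t, (‖φ t‖₊ : ℝ≥0∞) ≠ ⊤) :
    ∫⁻ x, (‖∫ t, φ t * g (x - t)‖₊ : ℝ≥0∞) ^ 2 ≤
      (∫⁻ t, (‖φ t‖₊ : ℝ≥0∞)) ^ 2 * ∫⁻ x, (‖g x‖₊ : ℝ≥0∞) ^ 2 := by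
  set F : ℝ → ℝ≥0∞ := fun t => (‖φ t‖₊ : ℝ≥0∞) with hF
  set G : ℝ → ℝ≥0∞ := fun x => (‖g x‖₊ : ℝ≥0∞) with hG
  have hFm : Measurable F := hφ.nnnorm.coe_nnreal_ennreal
  have hGm : Measurable G := hg.nnnorm.coe_nnreal_ennreal
  have step1 : ∀ x : ℝ, (‖∫ t, φ t * g (x - t)‖₊ : ℝ≥0∞) ≤ ∫⁻ t, F t * G (x - t) := by
    intro x
    calc (‖∫ t, φ t * g (x - t)‖₊ : ℝ≥0∞) ≤ ∫⁻ t, (‖φ t * g (x - t)‖₊ : ℝ≥0∞) :=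
        enorm_integral_le_lintegral_enorm _
      _ = ∫⁻ t, F t * G (x - t) := by
        refine lintegral_congr fun t => ?_
        simp [F, G, nnnorm_mul, ENNReal.coe_mul]
  have step2 : ∀ x : ℝ, (∫⁻ t, F t * G (x - t)) ^ 2 ≤
      (∫⁻ t, F t) * ∫⁻ t, F t * G (x - t) ^ 2 := fun x =>
    lint_cs F (fun t => G (x - t)) hFm (hGm.comp (measurable_const.sub measurable_id))
  calc ∫⁻ x, (‖∫ t, φ t * g (x - t)‖₊ : ℝ≥0∞) ^ 2
      ≤ ∫⁻ x, (∫⁻ t, F t) * ∫⁻ t, F t * G (x - t) ^ 2 := by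
        refine lintegral_mono fun x => ?_
        exact le_trans (pow_le_pow_left₀ zero_le (step1 x) 2) (step2 x)
    _ = (∫⁻ t, F t) * ∫⁻ x, ∫⁻ t, F t * G (x - t) ^ 2 := lintegral_const_mul' _ _ hφfin
    _ = (∫⁻ t, F t) * ∫⁻ t, ∫⁻ x, F t * G (x - t) ^ 2 := by
        rw [lintegral_lintegral_swap]
        exact ((hFm.comp measurable_snd).mul
          (((hGm.comp (measurable_fst.sub measurable_snd))).pow_const 2)).aemeasurable
    _ = (∫⁻ t, F t) * ∫⁻ t, F t * ∫⁻ x, G (x - t) ^ 2 := by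
        congr 1
        refine lintegral_congr fun t => ?_
        exact lintegral_const_mul _ ((hGm.comp (measurable_id.sub measurable_const)).pow_const 2)
    _ = (∫⁻ t, F t) * ∫⁻ t, F t * ∫⁻ x, G x ^ 2 := by
        congr 1
        refine lintegral_congr fun t => ?_
        rw [lintegral_sub_right_eq_self (fun x => G x ^ 2) t]
    _ = (∫⁻ t, F t) ^ 2 * ∫⁻ x, G x ^ 2 := by
        rw [lintegral_mul_const _ hFm]; ring

/-- Integration by parts moving a derivative across a convolution. -/
private lemma conv_parts {φf ψf ψf' : ℝ → ℝ} {R : ℝ} (hR : 0 < R)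
    (hφd : Differentiable ℝ φf) (hφc : Continuous (deriv φf))
    (hsupp : ∀ t, R ≤ |t| → φf t = 0)
    (hψd : ∀ s, HasDerivAt ψf (ψf' s) s)
    (hψ'loc : LocallyIntegrable ψf' volume) (x : ℝ) :
    ∫ t, deriv φf t * ψf (x - t) = ∫ t, φf t * ψf' (x - t) := by
  set S : ℝ := R + 1 with hSdef
  have hS0 : 0 < S := by positivity
  have hts : tsupport φf ⊆ Set.Icc (-R) R := by
    apply closure_minimal ?_ isClosed_Icc
    intro t ht
    have h1 : |t| ≤ R := by
      by_contra hc
      exact ht (hsupp t (le_of_lt (not_le.mp hc)))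
    exact abs_le.mp h1
  have hsub1 : Function.support (fun t => deriv φf t * ψf (x - t)) ⊆ Set.Ioc (-S) S := by
    intro t ht
    have h1 : deriv φf t ≠ 0 := fun h => ht (by simp [h])
    have h2 : t ∈ Set.Icc (-R) R := hts (support_deriv_subset h1)
    simp only [Set.mem_Icc] at h2
    exact ⟨by simp only [hSdef]; linarith [h2.1], by simp only [hSdef]; linarith [h2.2]⟩
  have hsub2 : Function.support (fun t => φf t * ψf' (x - t)) ⊆ Set.Ioc (-S) S := by
    intro t ht
    have h1 : φf t ≠ 0 := fun h => ht (by simp [h])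
    have h2 : t ∈ Set.Icc (-R) R := hts (subset_closure h1)
    simp only [Set.mem_Icc] at h2
    exact ⟨by simp only [hSdef]; linarith [h2.1], by simp only [hSdef]; linarith [h2.2]⟩
  have e1 : ∫ t, deriv φf t * ψf (x - t) = ∫ t in (-S)..S, deriv φf t * ψf (x - t) :=
    (intervalIntegral.integral_eq_integral_of_support_subset hsub1).symm
  have e2 : ∫ t, φf t * ψf' (x - t) = ∫ t in (-S)..S, φf t * ψf' (x - t) :=
    (intervalIntegral.integral_eq_integral_of_support_subset hsub2).symm
  have hu : ∀ t ∈ Set.uIcc (-S) S, HasDerivAt φf (deriv φf t) t :=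
    fun t _ => (hφd t).hasDerivAt
  have hv : ∀ t ∈ Set.uIcc (-S) S, HasDerivAt (fun t => ψf (x - t)) (-ψf' (x - t)) t := by
    intro t _
    have h1 : HasDerivAt (fun t : ℝ => x - t) (-1) t := (hasDerivAt_id t).const_sub x
    have h2 := (hψd (x - t)).comp t h1
    have h3 : -ψf' (x - t) = ψf' (x - t) * -1 := by ring
    rw [h3]; exact h2
  have hu' : IntervalIntegrable (deriv φf) volume (-S) S := hφc.intervalIntegrable _ _
  have hv'int : IntervalIntegrable (fun t => ψf' (x - t)) volume (-S) S := by
    have h0 : IntervalIntegrable ψf' volume (x - -S) (x - S) :=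
      (hψ'loc.integrableOn_isCompact isCompact_uIcc).intervalIntegrable
    have h1 := h0.comp_sub_left x
    simpa using h1
  have parts := intervalIntegral.integral_mul_deriv_eq_deriv_mul hu hv hu' hv'int.neg
  have hb1 : φf S = 0 := hsupp S (by rw [abs_of_pos hS0]; simp [hSdef])
  have hb2 : φf (-S) = 0 := hsupp (-S) (by rw [abs_neg, abs_of_pos hS0]; simp [hSdef])
  rw [hb1, hb2] at parts
  simp only [zero_mul, sub_zero, zero_sub] at parts
  have parts2 : -∫ t in (-S)..S, φf t * ψf' (x - t) =
      -∫ t in (-S)..S, deriv φf t * ψf (x - t) := by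
    rw [← parts, ← intervalIntegral.integral_neg]
    congr 1
    funext t
    ring
  rw [e1, e2]
  exact (neg_inj.mp parts2).symm

private lemma ofReal_sq (r : ℝ) : ENNReal.ofReal (r ^ 2) = (‖r‖₊ : ℝ≥0∞) ^ 2 := by
  rw [← sq_abs, ENNReal.ofReal_pow (abs_nonneg r), ← enorm_eq_nnnorm, Real.enorm_eq_ofReal_abs]

/-- With `g_n(x) = √(α_n/(8π²)) (ψ*ρ_n)(-log|x|/α_n)` on `ℝ⁴`, `(α_n)` a scale, `ψ` a
profile and `ρ_n(s) = α_n ρ(α_n s)`, the `L²` norm of `Δ g_n`, computed via the radial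
formula `‖Δg_n‖²_{L²(ℝ⁴)} = 2π² ∫ |-2w'(s)+w''(s)|² ds` with `w(s) = g_n(e^{-s})`,
is bounded by `C ‖ψ'‖_{L²(ℝ)}` uniformly in `n`. -/
theorem laplacian_gn_bound
    (ψ ψ' : ℝ → ℝ)
    (hψderiv : ∀ s, HasDerivAt ψ (ψ' s) s)
    (hψL2w : Integrable (fun s => (ψ s) ^ 2 * Real.exp (-4 * s)))
    (hψ'L2 : MemLp ψ' 2 (volume : Measure ℝ))
    (hψ0 : ∀ s ≤ (0 : ℝ), ψ s = 0)
    (ρ : ℝ → ℝ) (hρ : ContDiff ℝ (⊤ : ℕ∞) ρ) (hρpos : ∀ t, 0 ≤ ρ t)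
    (hρsupp : Function.support ρ ⊆ Set.Icc (-1 : ℝ) 1)
    (hρint : (∫ t, ρ t) = 1)
    (a : ℕ → ℝ) (ha_pos : ∀ n, 0 < a n) (ha : Tendsto a atTop atTop)
    (w w' w'' : ℕ → ℝ → ℝ)
    (hw : ∀ n s, w n s =
      Real.sqrt (a n / (8 * π ^ 2)) * ∫ t, ψ (s / a n - t) * (a n * ρ (a n * t)))
    (hw' : ∀ n s, HasDerivAt (w n) (w' n s) s)
    (hw'' : ∀ n s, HasDerivAt (w' n) (w'' n s) s) :
    ∃ C > (0 : ℝ), ∀ n,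
      Real.sqrt (2 * π ^ 2 * ∫ s, (-2 * w' n s + w'' n s) ^ 2) ≤
        C * Real.sqrt (∫ s, (ψ' s) ^ 2) := by
  classical
  -- n-independent objects
  set K : ℝ := ∫ t, |deriv ρ t| with hKdef
  have hK0 : 0 ≤ K := integral_nonneg fun t => abs_nonneg _
  refine ⟨Real.sqrt (12 + 3 * K ^ 2), Real.sqrt_pos.mpr (by positivity), ?_⟩
  -- facts about ψ
  have hψdiff : Differentiable ℝ ψ := fun s => (hψderiv s).differentiableAt
  have hψcont : Continuous ψ := hψdiff.continuous
  have hψloc : LocallyIntegrable ψ volume := hψcont.locallyIntegrable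
  have hψ'eq : ψ' = deriv ψ := funext fun s => ((hψderiv s).deriv).symm
  have hψ'meas : Measurable ψ' := by rw [hψ'eq]; exact measurable_deriv ψ
  have hψ'loc : LocallyIntegrable ψ' volume := hψ'L2.locallyIntegrable one_le_two
  -- facts about ρ
  have hρcont : Continuous ρ := hρ.continuous
  have hρ'cont : Continuous (deriv ρ) := hρ.continuous_deriv (by simp)
  have hρts : tsupport ρ ⊆ Set.Icc (-1 : ℝ) 1 := closure_minimal hρsupp isClosed_Icc
  have hρcs : HasCompactSupport ρ :=
    HasCompactSupport.intro isCompact_Icc fun t ht => by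
      by_contra h; exact ht (hρsupp h)
  have hρ'int : Integrable (deriv ρ) :=
    hρ'cont.integrable_of_hasCompactSupport hρcs.deriv
  have hρ'z : ∀ u : ℝ, u ∉ Set.Icc (-1 : ℝ) 1 → deriv ρ u = 0 := by
    intro u hu
    by_contra h
    exact hu (hρts (support_deriv_subset h))
  -- ψ' squared integral
  set J : ℝ≥0∞ := ∫⁻ x, (‖ψ' x‖₊ : ℝ≥0∞) ^ 2 with hJdef
  have hψ'sq : Integrable (fun x => ψ' x ^ 2) :=
    (memLp_two_iff_integrable_sq hψ'meas.aestronglyMeasurable).1 hψ'L2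
  have hJre : ∫ x, ψ' x ^ 2 = J.toReal := by
    rw [integral_eq_lintegral_of_nonneg_ae (Eventually.of_forall fun x => sq_nonneg _)
      ((hψ'meas.pow_const 2).aestronglyMeasurable)]
    congr 1
    exact lintegral_congr fun x => ofReal_sq _
  have hJfin : J ≠ ⊤ := by
    have h3 : (∫⁻ x, (‖ψ' x ^ 2‖₊ : ℝ≥0∞)) < ⊤ := hψ'sq.hasFiniteIntegral
    have : J = ∫⁻ x, (‖ψ' x ^ 2‖₊ : ℝ≥0∞) := by
      refine lintegral_congr fun x => ?_
      rw [← ofReal_sq, ← enorm_eq_nnnorm, Real.enorm_eq_ofReal_abs, abs_of_nonneg (sq_nonneg _)]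
    rw [this]
    exact h3.ne
  intro n
  have hA : 0 < a n := ha_pos n
  set c : ℝ := Real.sqrt (a n / (8 * π ^ 2)) with hcdef
  set φ : ℝ → ℝ := fun t => a n * ρ (a n * t) with hφdef
  set φ2 : ℝ → ℝ := fun t => a n * deriv ρ (a n * t) with hφ2def
  set L : ℝ →L[ℝ] ℝ →L[ℝ] ℝ := ContinuousLinearMap.mul ℝ ℝ with hLdef
  -- φ basics
  have hφ1 : ContDiff ℝ 1 φ :=
    contDiff_const.mul ((hρ.of_le (by simp)).comp (contDiff_const.mul contDiff_id))
  have hφcont : Continuous φ := hφ1.continuous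
  have hφz : ∀ t : ℝ, 2 / a n ≤ |t| → φ t = 0 := by
    intro t ht
    have h1 : (1 : ℝ) < |a n * t| := by
      rw [abs_mul, abs_of_pos hA]
      calc (1:ℝ) < 2 := one_lt_two
        _ = a n * (2 / a n) := by field_simp
        _ ≤ a n * |t| := by exact mul_le_mul_of_nonneg_left ht hA.le
    have h2 : ρ (a n * t) = 0 := by
      by_contra h
      have hmem := hρsupp h
      simp only [Set.mem_Icc] at hmem
      have habs : |a n * t| ≤ 1 := abs_le.mpr hmem
      linarith
    simp [hφdef, h2]
  have hφcs : HasCompactSupport φ := by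
    apply HasCompactSupport.intro (isCompact_Icc (a := -(2 / a n)) (b := 2 / a n))
    intro t ht
    simp only [Set.mem_Icc, not_and_or, not_le] at ht
    refine hφz t ?_
    rcases ht with h | h
    · rw [abs_of_neg (by linarith [div_pos two_pos hA] : t < 0)]; linarith
    · rw [abs_of_pos (by linarith [div_pos two_pos hA] : 0 < t)]; linarith
  have hφint : Integrable φ := hφcont.integrable_of_hasCompactSupport hφcs
  have hφnonneg : ∀ t, 0 ≤ φ t := fun t => mul_nonneg hA.le (hρpos _)
  have hint1 : ∫ t, φ t = 1 := by
    calc ∫ t, φ t = a n * ∫ t, ρ (a n * t) := integral_const_mul _ _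
      _ = a n * (|(a n)⁻¹| • ∫ t, ρ t) := by
          rw [MeasureTheory.Measure.integral_comp_mul_left ρ (a n)]
      _ = 1 := by
          rw [hρint, abs_of_pos (inv_pos.2 hA), smul_eq_mul]
          field_simp
  -- deriv φ
  have hφd : ∀ t, HasDerivAt φ (a n * φ2 t) t := by
    intro t
    have h1 : HasDerivAt ρ (deriv ρ (a n * t)) (a n * t) :=
      ((hρ.differentiable (by simp)) (a n * t)).hasDerivAt
    have h2 : HasDerivAt (fun t : ℝ => a n * t) (a n) t := by
      simpa using (hasDerivAt_id t).const_mul (a n)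
    have h3 := (h1.comp t h2).const_mul (a n)
    have h4 : a n * φ2 t = a n * (deriv ρ (a n * t) * a n) := by
      simp only [hφ2def]
      ring
    rw [h4]; exact h3
  have hderivφ : deriv φ = fun t => a n * φ2 t := funext fun t => (hφd t).deriv
  -- φ2 basics
  have hφ2cont : Continuous φ2 :=
    continuous_const.mul (hρ'cont.comp (continuous_const.mul continuous_id))
  have hφ2z : ∀ t : ℝ, 2 / a n ≤ |t| → φ2 t = 0 := by
    intro t ht
    have h1 : (1 : ℝ) < |a n * t| := by
      rw [abs_mul, abs_of_pos hA]
      calc (1:ℝ) < 2 := one_lt_two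
        _ = a n * (2 / a n) := by field_simp
        _ ≤ a n * |t| := by exact mul_le_mul_of_nonneg_left ht hA.le
    have h2 : deriv ρ (a n * t) = 0 := by
      apply hρ'z
      intro hmem
      simp only [Set.mem_Icc] at hmem
      have habs : |a n * t| ≤ 1 := abs_le.mpr hmem
      linarith
    simp [hφ2def, h2]
  have hφ2cs : HasCompactSupport φ2 := by
    apply HasCompactSupport.intro (isCompact_Icc (a := -(2 / a n)) (b := 2 / a n))
    intro t ht
    simp only [Set.mem_Icc, not_and_or, not_le] at ht
    refine hφ2z t ?_
    rcases ht with h | h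
    · rw [abs_of_neg (by linarith [div_pos two_pos hA] : t < 0)]; linarith
    · rw [abs_of_pos (by linarith [div_pos two_pos hA] : 0 < t)]; linarith
  have hφ2int : Integrable φ2 := hφ2cont.integrable_of_hasCompactSupport hφ2cs
  have hint2 : ∫ t, |φ2 t| = K := by
    calc ∫ t, |φ2 t| = ∫ t, a n * |deriv ρ (a n * t)| := by
          refine integral_congr_ae (Eventually.of_forall fun t => ?_)
          simp only [hφ2def]
          rw [abs_mul, abs_of_pos hA]
      _ = a n * ∫ t, |deriv ρ (a n * t)| := integral_const_mul _ _
      _ = a n * (|(a n)⁻¹| • ∫ t, |deriv ρ t|) := by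
          rw [MeasureTheory.Measure.integral_comp_mul_left (fun u => |deriv ρ u|) (a n)]
      _ = K := by
          rw [abs_of_pos (inv_pos.2 hA), smul_eq_mul, hKdef]
          field_simp
  -- lintegral L¹ norms
  have hφl1 : ∫⁻ t, (‖φ t‖₊ : ℝ≥0∞) = ENNReal.ofReal 1 := by
    erw [← ofReal_integral_norm_eq_lintegral_enorm hφint]
    congr 1
    rw [← hint1]
    refine integral_congr_ae (Eventually.of_forall fun t => ?_)
    show ‖φ t‖ = φ t
    rw [Real.norm_eq_abs, abs_of_nonneg (hφnonneg t)]
  have hφ2l1 : ∫⁻ t, (‖φ2 t‖₊ : ℝ≥0∞) = ENNReal.ofReal K := by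
    erw [← ofReal_integral_norm_eq_lintegral_enorm hφ2int]
    have he : (∫ t, ‖φ2 t‖) = K := by
      rw [← hint2]
      refine integral_congr_ae (Eventually.of_forall fun t => ?_)
      show ‖φ2 t‖ = |φ2 t|
      rw [Real.norm_eq_abs]
    rw [he]
    -- convolutions
  set u0 : ℝ → ℝ := φ ⋆[L, volume] ψ with hu0def
  set P : ℝ → ℝ := φ ⋆[L, volume] ψ' with hPdef0
  set Q : ℝ → ℝ := φ2 ⋆[L, volume] ψ' with hQdef0
  have hPdef : ∀ x, P x = ∫ t, φ t * ψ' (x - t) := by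
    intro x
    rw [hPdef0, MeasureTheory.convolution_def]
    simp only [hLdef, ContinuousLinearMap.mul_apply']
  have hQdef : ∀ x, Q x = ∫ t, φ2 t * ψ' (x - t) := by
    intro x
    rw [hQdef0, MeasureTheory.convolution_def]
    simp only [hLdef, ContinuousLinearMap.mul_apply']
  -- derivative of the convolution with ψ
  have hu0d : ∀ x, HasDerivAt u0 ((deriv φ ⋆[L, volume] ψ) x) x := fun x =>
    hφcs.hasDerivAt_convolution_left L hφ1 hψloc x
  have hPd : ∀ x, HasDerivAt P ((deriv φ ⋆[L, volume] ψ') x) x := fun x =>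
    hφcs.hasDerivAt_convolution_left L hφ1 hψ'loc x
  -- integration by parts : (deriv φ) ⋆ ψ = φ ⋆ ψ'
  have hderivφcont : Continuous (deriv φ) := by
    rw [hderivφ]
    exact continuous_const.mul hφ2cont
  have hparts : ∀ x, (deriv φ ⋆[L, volume] ψ) x = P x := by
    intro x
    rw [MeasureTheory.convolution_def, hPdef x]
    simp only [hLdef, ContinuousLinearMap.mul_apply']
    exact conv_parts (R := 2 / a n) (by positivity) (hφ1.differentiable one_ne_zero)
      hderivφcont hφz hψderiv hψ'loc x
  have hQeq : ∀ x, (deriv φ ⋆[L, volume] ψ') x = a n * Q x := by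
    intro x
    rw [MeasureTheory.convolution_def, hQdef x]
    simp only [hLdef, ContinuousLinearMap.mul_apply']
    rw [hderivφ, ← integral_const_mul]
    refine integral_congr_ae (Eventually.of_forall fun t => ?_)
    show a n * φ2 t * ψ' (x - t) = a n * (φ2 t * ψ' (x - t))
    ring
  -- formula for w
  have hwfun : w n = fun s => c * u0 (s / a n) := by
    funext s
    rw [hw n s, hu0def, MeasureTheory.convolution_def]
    simp only [hLdef, ContinuousLinearMap.mul_apply']
    congr 1
    refine integral_congr_ae (Eventually.of_forall fun t => ?_)
    show ψ (s / a n - t) * (a n * ρ (a n * t)) = φ t * ψ (s / a n - t)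
    rw [hφdef]
    ring
  -- identify w'
  have hw'for : ∀ s, w' n s = (c / a n) * P (s / a n) := by
    intro s
    have hdq : HasDerivAt (fun x : ℝ => x / a n) (1 / a n) s := by
      simpa using (hasDerivAt_id s).div_const (a n)
    have H0 := ((hu0d (s / a n)).comp s hdq).const_mul c
    have H : HasDerivAt (w n)
        (c * ((deriv φ ⋆[L, volume] ψ) (s / a n) * (1 / a n))) s := by
      rw [hwfun]
      exact H0
    have hval := (hw' n s).unique H
    rw [hval, hparts]
    ring
  have hw'fun : w' n = fun s => (c / a n) * P (s / a n) := funext hw'for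
  -- identify w''
  have hw''for : ∀ s, w'' n s = (c / a n) * Q (s / a n) := by
    intro s
    have hdq : HasDerivAt (fun x : ℝ => x / a n) (1 / a n) s := by
      simpa using (hasDerivAt_id s).div_const (a n)
    have H0 := ((hPd (s / a n)).comp s hdq).const_mul (c / a n)
    have H : HasDerivAt (w' n)
        ((c / a n) * ((deriv φ ⋆[L, volume] ψ') (s / a n) * (1 / a n))) s := by
      rw [hw'fun]
      exact H0
    have hval := (hw'' n s).unique H
    rw [hval, hQeq]
    field_simp
  -- the function h
  set h : ℝ → ℝ := fun x => -2 * P x + Q x with hhdef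
  have hsum : ∀ s, -2 * w' n s + w'' n s = (c / a n) * h (s / a n) := by
    intro s
    rw [hw'for, hw''for, hhdef]
    ring
  have hPc : Continuous P := by
    rw [hPdef0]
    exact hφcs.continuous_convolution_left L hφcont hψ'loc
  have hQc : Continuous Q := by
    rw [hQdef0]
    exact hφ2cs.continuous_convolution_left L hφ2cont hψ'loc
  have hhc : Continuous h := by
    rw [hhdef]
    exact (continuous_const.mul hPc).add hQc
    -- Young bounds
  have hφmeas : Measurable φ := hφcont.measurable
  have hφ2meas : Measurable φ2 := hφ2cont.measurable
  have hPbound : ∫⁻ x, (‖P x‖₊ : ℝ≥0∞) ^ 2 ≤ (ENNReal.ofReal 1) ^ 2 * J := by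
    have hy := young12 φ ψ' hφmeas hψ'meas (by rw [hφl1]; exact ENNReal.ofReal_ne_top)
    rw [hφl1] at hy
    calc ∫⁻ x, (‖P x‖₊ : ℝ≥0∞) ^ 2 = ∫⁻ x, (‖∫ t, φ t * ψ' (x - t)‖₊ : ℝ≥0∞) ^ 2 :=
          lintegral_congr fun x => by rw [hPdef x]
      _ ≤ _ := hy
  have hQbound : ∫⁻ x, (‖Q x‖₊ : ℝ≥0∞) ^ 2 ≤ (ENNReal.ofReal K) ^ 2 * J := by
    have hy := young12 φ2 ψ' hφ2meas hψ'meas (by rw [hφ2l1]; exact ENNReal.ofReal_ne_top)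
    rw [hφ2l1] at hy
    calc ∫⁻ x, (‖Q x‖₊ : ℝ≥0∞) ^ 2 = ∫⁻ x, (‖∫ t, φ2 t * ψ' (x - t)‖₊ : ℝ≥0∞) ^ 2 :=
          lintegral_congr fun x => by rw [hQdef x]
      _ ≤ _ := hy
  have hhb : ∫⁻ x, (‖h x‖₊ : ℝ≥0∞) ^ 2 ≤ ENNReal.ofReal (12 + 3 * K ^ 2) * J := by
    calc ∫⁻ x, (‖h x‖₊ : ℝ≥0∞) ^ 2
        ≤ ∫⁻ x, (12 * (‖P x‖₊ : ℝ≥0∞) ^ 2 + 3 * (‖Q x‖₊ : ℝ≥0∞) ^ 2) := by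
          refine lintegral_mono fun x => ?_
          have h2c : (‖(-2 : ℝ) * P x‖₊ : ℝ≥0∞) = 2 * (‖P x‖₊ : ℝ≥0∞) := by
            rw [nnnorm_mul, ENNReal.coe_mul]
            norm_num
          have h1 : (‖h x‖₊ : ℝ≥0∞) ≤ 2 * (‖P x‖₊ : ℝ≥0∞) + ‖Q x‖₊ := by
            rw [hhdef]
            calc (‖-2 * P x + Q x‖₊ : ℝ≥0∞) ≤ (‖(-2 : ℝ) * P x‖₊ : ℝ≥0∞) + ‖Q x‖₊ := by
                  exact_mod_cast nnnorm_add_le _ _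
              _ = 2 * (‖P x‖₊ : ℝ≥0∞) + ‖Q x‖₊ := by rw [h2c]
          calc (‖h x‖₊ : ℝ≥0∞) ^ 2 ≤ (2 * (‖P x‖₊ : ℝ≥0∞) + (‖Q x‖₊ : ℝ≥0∞)) ^ 2 :=
                pow_le_pow_left₀ zero_le h1 2
            _ ≤ 3 * (2 * (‖P x‖₊ : ℝ≥0∞)) ^ 2 + 3 * (‖Q x‖₊ : ℝ≥0∞) ^ 2 := enn_sq_add_le _ _
            _ = 12 * (‖P x‖₊ : ℝ≥0∞) ^ 2 + 3 * (‖Q x‖₊ : ℝ≥0∞) ^ 2 := by ring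
      _ = 12 * (∫⁻ x, (‖P x‖₊ : ℝ≥0∞) ^ 2) + 3 * (∫⁻ x, (‖Q x‖₊ : ℝ≥0∞) ^ 2) := by
          rw [lintegral_add_left ((hPc.measurable.nnnorm.coe_nnreal_ennreal.pow_const 2).const_mul 12),
            lintegral_const_mul 12 (hPc.measurable.nnnorm.coe_nnreal_ennreal.pow_const 2),
            lintegral_const_mul 3 (hQc.measurable.nnnorm.coe_nnreal_ennreal.pow_const 2)]
      _ ≤ 12 * ((ENNReal.ofReal 1) ^ 2 * J) + 3 * ((ENNReal.ofReal K) ^ 2 * J) :=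
          add_le_add (mul_le_mul_right hPbound 12) (mul_le_mul_right hQbound 3)
      _ = ENNReal.ofReal (12 + 3 * K ^ 2) * J := by
          rw [ENNReal.ofReal_one, ENNReal.ofReal_add (by norm_num) (by positivity),
            ENNReal.ofReal_mul (by norm_num), ENNReal.ofReal_pow hK0,
            ENNReal.ofReal_ofNat, ENNReal.ofReal_ofNat]
          ring
  -- real-variable bound
  have hIh : ∫ x, h x ^ 2 ≤ (12 + 3 * K ^ 2) * ∫ x, ψ' x ^ 2 := by
    have e1 : ∫ x, h x ^ 2 = (∫⁻ x, (‖h x‖₊ : ℝ≥0∞) ^ 2).toReal := by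
      rw [integral_eq_lintegral_of_nonneg_ae (Eventually.of_forall fun x => sq_nonneg _)
        ((hhc.measurable.pow_const 2).aestronglyMeasurable)]
      congr 1
      exact lintegral_congr fun x => ofReal_sq _
    have e2 : (12 + 3 * K ^ 2) * ∫ x, ψ' x ^ 2 =
        (ENNReal.ofReal (12 + 3 * K ^ 2) * J).toReal := by
      rw [ENNReal.toReal_mul, ENNReal.toReal_ofReal (by positivity), hJre]
    rw [e1, e2]
    exact ENNReal.toReal_mono (ENNReal.mul_ne_top ENNReal.ofReal_ne_top hJfin) hhb
  -- scaling
  have hIeq : ∫ s, (-2 * w' n s + w'' n s) ^ 2 = (c / a n) ^ 2 * (a n * ∫ x, h x ^ 2) := by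
    calc ∫ s, (-2 * w' n s + w'' n s) ^ 2
        = ∫ s, (c / a n) ^ 2 * (fun x => h x ^ 2) (s / a n) := by
          refine integral_congr_ae (Eventually.of_forall fun s => ?_)
          show (-2 * w' n s + w'' n s) ^ 2 = (c / a n) ^ 2 * h (s / a n) ^ 2
          rw [hsum s]; ring
      _ = (c / a n) ^ 2 * ∫ s, (fun x => h x ^ 2) (s / a n) := integral_const_mul _ _
      _ = (c / a n) ^ 2 * (|a n| • ∫ x, h x ^ 2) := by
          rw [MeasureTheory.Measure.integral_comp_div (fun x => h x ^ 2) (a n)]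
      _ = (c / a n) ^ 2 * (a n * ∫ x, h x ^ 2) := by rw [abs_of_pos hA, smul_eq_mul]
  have hπ : (π : ℝ) ≠ 0 := Real.pi_ne_zero
  have hc2 : (c / a n) ^ 2 * a n = 1 / (8 * π ^ 2) := by
    have hcsq : c ^ 2 = a n / (8 * π ^ 2) := Real.sq_sqrt (by positivity)
    rw [div_pow, hcsq]
    field_simp
  have hkey : 2 * π ^ 2 * ∫ s, (-2 * w' n s + w'' n s) ^ 2 = (1 / 4) * ∫ x, h x ^ 2 := by
    rw [hIeq, show 2 * π ^ 2 * ((c / a n) ^ 2 * (a n * ∫ x, h x ^ 2)) =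
      ((c / a n) ^ 2 * a n) * (2 * π ^ 2 * ∫ x, h x ^ 2) from by ring, hc2]
    field_simp
    ring
  -- endgame
  have hI2nn : 0 ≤ ∫ x, h x ^ 2 := integral_nonneg fun x => sq_nonneg _
  have hψInn : 0 ≤ ∫ x, ψ' x ^ 2 := integral_nonneg fun x => sq_nonneg _
  calc Real.sqrt (2 * π ^ 2 * ∫ s, (-2 * w' n s + w'' n s) ^ 2)
      = Real.sqrt ((1 / 4) * ∫ x, h x ^ 2) := by rw [hkey]
    _ ≤ Real.sqrt ((12 + 3 * K ^ 2) * ∫ x, ψ' x ^ 2) := by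
        apply Real.sqrt_le_sqrt
        have hb : 0 ≤ (12 + 3 * K ^ 2) * ∫ x, ψ' x ^ 2 := mul_nonneg (by positivity) hψInn
        linarith [hIh]
    _ = Real.sqrt (12 + 3 * K ^ 2) * Real.sqrt (∫ x, ψ' x ^ 2) :=
        Real.sqrt_mul (by positivity) _
end
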